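/- arXiv:1804.02552 — 10 statements merged into one kernel-verified Lean document; each statement's English description precedes it below -/
import Mathlib

section
/- For a Tychonoff (completely regular Hausdorff) space X the following conditions are equivalent: (1) X is not pseudocompact; (2) C_p(X) has a linear subspace that is linearly homeomorphic to ℝ^ℕ; (3) there is a linear subspace Z of C_p(X) such that the quotient space C_p(X)/Z is linearly homeomorphic to ℝ^ℕ; (4) there exists a continuous linear surjection from C_p(X) onto ℝ^ℕ. -/
/-!
If `X` is pseudocompact, `C_p(X)` and each of its linear subspaces is a countable union of
bounded sets (the functions with `|f| ≤ n`), a property inherited by continuous linear images,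
whereas a diagonal argument shows that `ℝ^ℕ` is not such a union.

If `X` is not pseudocompact, an unbounded continuous `g ≥ 0` and points `x n` with
`g (x n) + 1 ≤ g (x (n + 1))` give continuous functions `b n ∘ g`, with `b n` a bump around
`g (x n)`, whose supports are locally finite and which satisfy `b n (g (x m)) = δ n m`.
Then `a ↦ ∑ n, a n • b n ∘ g` is a continuous linear right inverse of the evaluation
`f ↦ (f (x n))ₙ`, so `ℝ^ℕ` is a complemented subspace of `C_p(X)`.
-/

open Topology Filter

/-- The space `C_p(X)` of continuous real functions with the topology of pointwise
convergence, realized as a submodule of `X → ℝ` (with the subspace topology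
inherited from the product topology). -/
def Cp (X : Type*) [TopologicalSpace X] : Submodule ℝ (X → ℝ) where
  carrier := {f | Continuous f}
  add_mem' hf hg := hf.add hg
  zero_mem' := continuous_const
  smul_mem' _c _f hf := continuous_const.mul hf

/-- A topological space is pseudocompact if every continuous real-valued function
on it is bounded. -/
def Pseudocompact (X : Type*) [TopologicalSpace X] : Prop :=
  ∀ f : X → ℝ, Continuous f → ∃ C, ∀ x, |f x| ≤ C


open Set Function Bornology

section SigmaBounded

variable {𝕜 E F : Type*} [NormedDivisionRing 𝕜] [AddCommGroup E] [Module 𝕜 E]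
  [TopologicalSpace E] [AddCommGroup F] [Module 𝕜 F] [TopologicalSpace F]

theorem isVonNBounded_of_isInducing_image {j : E →ₗ[𝕜] F} (hj : IsInducing j) {s : Set E}
    (hs : IsVonNBounded 𝕜 (j '' s)) : IsVonNBounded 𝕜 s := by
  rw [isVonNBounded_iff_tendsto_smallSets_nhds] at hs ⊢
  rw [hj.nhds_eq_comap, map_zero, smallSets_comap_eq_comap_image, tendsto_comap_iff]
  simpa only [Function.comp_def, image_smul_set] using hs

variable (𝕜 E) in
def SigmaVonNBounded : Prop :=
  ∃ B : ℕ → Set E, (∀ n, IsVonNBounded 𝕜 (B n)) ∧ ⋃ n, B n = univ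

theorem SigmaVonNBounded.of_surjective (h : SigmaVonNBounded 𝕜 E) (f : E →L[𝕜] F)
    (hf : Surjective f) : SigmaVonNBounded 𝕜 F := by
  obtain ⟨B, hB, hcover⟩ := h
  refine ⟨fun n => f '' B n, fun n => (hB n).image f, ?_⟩
  rw [← image_iUnion, hcover, image_univ, hf.range_eq]

end SigmaBounded

theorem not_sigmaVonNBounded_nat_real : ¬ SigmaVonNBounded ℝ (ℕ → ℝ) := by
  rintro ⟨B, hB, hcover⟩
  have hcoord (n : ℕ) : ∃ r, ∀ y ∈ B n, ‖y n‖ ≤ r :=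
    (NormedSpace.image_isVonNBounded_iff ℝ).mp (isVonNBounded_pi_iff.mp (hB n) n)
  choose r hr using hcoord
  obtain ⟨n, hn⟩ := mem_iUnion.mp (hcover.symm ▸ mem_univ (fun n => r n + 1))
  have := hr n _ hn
  rw [Real.norm_eq_abs] at this
  linarith [le_abs_self (r n + 1)]

theorem isVonNBounded_setOf_forall_abs_le (ι : Type*) (r : ℝ) :
    IsVonNBounded ℝ {f : ι → ℝ | ∀ i, |f i| ≤ r} :=
  isVonNBounded_pi_iff.mpr fun i =>
    (NormedSpace.image_isVonNBounded_iff ℝ).mpr ⟨r, fun _ hf => hf i⟩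

theorem Pseudocompact.sigmaVonNBounded {X : Type*} [TopologicalSpace X] (hX : Pseudocompact X)
    {E : Type*} [AddCommGroup E] [Module ℝ E] [TopologicalSpace E]
    (j : E →ₗ[ℝ] (X → ℝ)) (hj : IsInducing j) (hcont : ∀ g, Continuous (j g)) :
    SigmaVonNBounded ℝ E := by
  refine ⟨fun n => j ⁻¹' {f | ∀ x, |f x| ≤ n}, fun n => ?_, ?_⟩
  · exact isVonNBounded_of_isInducing_image hj
      ((isVonNBounded_setOf_forall_abs_le X n).subset (image_preimage_subset _ _))
  · refine eq_univ_of_forall fun g => mem_iUnion.mpr ?_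
    obtain ⟨C, hC⟩ := hX _ (hcont g)
    obtain ⟨n, hn⟩ := exists_nat_ge C
    exact ⟨n, fun x => (hC x).trans hn⟩

section Retract

variable {R E F : Type*} [Ring R] [AddCommGroup E] [Module R E] [TopologicalSpace E]
  [AddCommGroup F] [Module R F] [TopologicalSpace F]

def ContinuousLinearEquiv.ofLeftInverse {σ : F →L[R] E} {T : E →L[R] F}
    (h : LeftInverse T σ) : F ≃L[R] σ.range where
  toLinearEquiv := LinearEquiv.ofLeftInverse h
  continuous_toFun := σ.continuous.codRestrict _
  continuous_invFun := T.continuous.comp continuous_subtype_val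

noncomputable def ContinuousLinearEquiv.quotKerOfLeftInverse [IsTopologicalAddGroup E]
    {σ : F →L[R] E} {T : E →L[R] F} (h : LeftInverse T σ) : (E ⧸ T.ker) ≃L[R] F :=
  (Submodule.quotientEquivOfIsTopCompl _ _
    (σ.isTopCompl_range_ker_of_leftInverse T h).symm).trans (ofLeftInverse h).symm

end Retract

theorem locallyFinite_Ici_of_tendsto {ι α : Type*} [LinearOrder α] [TopologicalSpace α]
    [OrderTopology α] [NoMaxOrder α] {l : ι → α} (hl : Tendsto l cofinite atTop) :
    LocallyFinite fun i => Ici (l i) := by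
  intro a
  obtain ⟨b, hab⟩ := exists_gt a
  refine ⟨Iio b, Iio_mem_nhds hab, (eventually_cofinite.mp (hl.eventually_ge_atTop b)).subset ?_⟩
  rintro i ⟨y, hy, hyb⟩ hbl
  exact lt_irrefl _ ((hbl.trans hy).trans_lt hyb)

theorem add_le_of_forall_add_one_le {s : ℕ → ℝ} (hs : ∀ n, s n + 1 ≤ s (n + 1)) {m n : ℕ}
    (hmn : m ≤ n) : s m + (n - m : ℕ) ≤ s n := by
  induction n, hmn using Nat.le_induction with
  | base => simp
  | succ n hmn ih =>
    rw [Nat.succ_sub hmn]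
    push_cast
    linarith [hs n]

theorem add_one_le_of_forall_add_one_le {s : ℕ → ℝ} (hs : ∀ n, s n + 1 ≤ s (n + 1)) {m n : ℕ}
    (hmn : m < n) : s m + 1 ≤ s n :=
  calc s m + 1 ≤ s m + (n - m : ℕ) := by gcongr; exact_mod_cast Nat.sub_pos_of_lt hmn
    _ ≤ s n := add_le_of_forall_add_one_le hs hmn.le

theorem exists_bump_family {s : ℕ → ℝ} (hs : ∀ n, s n + 1 ≤ s (n + 1)) :
    ∃ b : ℕ → ℝ → ℝ, (∀ n, Continuous (b n)) ∧ LocallyFinite (fun n => support (b n)) ∧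
      ∀ n m, b n (s m) = if n = m then 1 else 0 := by
  let b n : ContDiffBump (s n) := ⟨1 / 4, 1 / 2, by norm_num, by norm_num⟩
  have hrOut (n : ℕ) : (b n).rOut = 1 / 2 := rfl
  refine ⟨fun n => b n, fun n => (b n).continuous, ?_, fun n m => ?_⟩
  · have hl : Tendsto (fun n => s n - 1 / 2) cofinite atTop := by
      rw [Nat.cofinite_eq_atTop]
      refine tendsto_atTop_add_const_right _ _ (tendsto_atTop_mono (fun n => ?_)
        (tendsto_atTop_add_const_left _ (s 0) tendsto_natCast_atTop_atTop))
      simpa using add_le_of_forall_add_one_le hs (Nat.zero_le n)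
    refine (locallyFinite_Ici_of_tendsto hl).subset fun n t ht => ?_
    rw [(b n).support_eq, Metric.mem_ball, Real.dist_eq, hrOut] at ht
    exact mem_Ici.mpr (by linarith [neg_abs_le (t - s n)])
  · split_ifs with hnm
    · subst hnm
      exact (b n).one_of_mem_closedBall (Metric.mem_closedBall_self (b n).rIn_pos.le)
    · refine (b n).zero_of_le_dist ?_
      rw [Real.dist_eq, hrOut]
      rcases lt_or_gt_of_ne hnm with h | h
      · linarith [add_one_le_of_forall_add_one_le hs h, le_abs_self (s m - s n)]
      · linarith [add_one_le_of_forall_add_one_le hs h, neg_abs_le (s m - s n)]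

section LocallyFiniteSum

variable {X : Type*} [TopologicalSpace X] {c : ℕ → X → ℝ}

theorem finsum_mul_eq_sum_of_locallyFinite (hc : LocallyFinite fun n => support (c n))
    (a : ℕ → ℝ) (x : X) :
    ∑ᶠ n, a n * c n x = ∑ n ∈ (hc.point_finite x).toFinset, a n * c n x :=
  finsum_eq_sum_of_support_subset _ fun n hn => by
    simpa using right_ne_zero_of_mul hn

noncomputable def locallyFiniteSumCLM (hcont : ∀ n, Continuous (c n))
    (hc : LocallyFinite fun n => support (c n)) : (ℕ → ℝ) →L[ℝ] Cp X where
  toFun a := ⟨fun x => ∑ᶠ n, a n * c n x,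
    continuous_finsum (fun n => continuous_const.mul (hcont n))
      (hc.subset fun n => support_mul_subset_right _ _)⟩
  map_add' a b := by
    ext x
    change ∑ᶠ n, (a + b) n * c n x = ∑ᶠ n, a n * c n x + ∑ᶠ n, b n * c n x
    rw [finsum_mul_eq_sum_of_locallyFinite hc, finsum_mul_eq_sum_of_locallyFinite hc,
      finsum_mul_eq_sum_of_locallyFinite hc, ← Finset.sum_add_distrib]
    simp only [Pi.add_apply, add_mul]
  map_smul' r a := by
    ext x
    change ∑ᶠ n, (r • a) n * c n x = r * ∑ᶠ n, a n * c n x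
    rw [finsum_mul_eq_sum_of_locallyFinite hc, finsum_mul_eq_sum_of_locallyFinite hc,
      Finset.mul_sum]
    simp only [Pi.smul_apply, smul_eq_mul, mul_assoc]
  cont := by
    refine Continuous.subtype_mk (continuous_pi fun x => ?_) _
    simp_rw [finsum_mul_eq_sum_of_locallyFinite hc]
    fun_prop

variable (X) in
noncomputable def evalCLM (x : ℕ → X) : Cp X →L[ℝ] (ℕ → ℝ) :=
  ContinuousLinearMap.pi fun n => (ContinuousLinearMap.proj (x n)).comp (Cp X).subtypeL

theorem leftInverse_evalCLM_locallyFiniteSumCLM (hcont : ∀ n, Continuous (c n))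
    (hc : LocallyFinite fun n => support (c n)) {x : ℕ → X}
    (hx : ∀ n m, c n (x m) = if n = m then 1 else 0) :
    LeftInverse (evalCLM X x) (locallyFiniteSumCLM hcont hc) := by
  intro a
  ext m
  change ∑ᶠ n, a n * c n (x m) = a m
  rw [finsum_eq_single _ m fun n hn => by simp [hx, hn]]
  simp [hx]

end LocallyFiniteSum

theorem exists_seq_add_one_le_of_not_pseudocompact {X : Type*} [TopologicalSpace X]
    (hX : ¬ Pseudocompact X) :
    ∃ g : X → ℝ, Continuous g ∧ ∃ x : ℕ → X, ∀ n, g (x n) + 1 ≤ g (x (n + 1)) := by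
  simp only [Pseudocompact, not_forall, not_exists, not_le] at hX
  obtain ⟨f, hf, hunbdd⟩ := hX
  choose y hy using hunbdd
  exact ⟨fun x => |f x|, hf.abs, fun n => Nat.rec (y 0) (fun _ x => y (|f x| + 1)) n,
    fun n => (hy _).le⟩

theorem exists_leftInverse_of_not_pseudocompact {X : Type*} [TopologicalSpace X]
    (hX : ¬ Pseudocompact X) :
    ∃ (T : Cp X →L[ℝ] (ℕ → ℝ)) (σ : (ℕ → ℝ) →L[ℝ] Cp X), LeftInverse T σ := by
  obtain ⟨g, hg, x, hx⟩ := exists_seq_add_one_le_of_not_pseudocompact hX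
  obtain ⟨b, hbcont, hblf, hbδ⟩ := exists_bump_family (s := g ∘ x) hx
  have hlf : LocallyFinite fun n => support (b n ∘ g) := by
    simpa only [support_comp_eq_preimage] using hblf.preimage_continuous hg
  exact ⟨_, _, leftInverse_evalCLM_locallyFiniteSumCLM (fun n => (hbcont n).comp hg) hlf
    hbδ⟩

theorem cp_not_pseudocompact_tfae_general (X : Type*) [TopologicalSpace X] :
    List.TFAE
      [¬ Pseudocompact X,
       ∃ S : Submodule ℝ (Cp X), Nonempty (S ≃L[ℝ] (ℕ → ℝ)),
       ∃ Z : Submodule ℝ (Cp X), Nonempty ((Cp X ⧸ Z) ≃L[ℝ] (ℕ → ℝ)),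
       ∃ T : Cp X →L[ℝ] (ℕ → ℝ), Function.Surjective T] := by
  tfae_have 1 → 2 := fun hX =>
    let ⟨_, _, h⟩ := exists_leftInverse_of_not_pseudocompact hX
    ⟨_, ⟨(ContinuousLinearEquiv.ofLeftInverse h).symm⟩⟩
  tfae_have 1 → 3 := fun hX =>
    let ⟨_, _, h⟩ := exists_leftInverse_of_not_pseudocompact hX
    ⟨_, ⟨ContinuousLinearEquiv.quotKerOfLeftInverse h⟩⟩
  tfae_have 3 → 4 := fun ⟨Z, ⟨e⟩⟩ =>
    ⟨(e : Cp X ⧸ Z →L[ℝ] (ℕ → ℝ)).comp Z.mkQL, e.surjective.comp Z.mkQ_surjective⟩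
  tfae_have 2 → 1 := by
    rintro ⟨S, ⟨e⟩⟩ hX
    have hS : SigmaVonNBounded ℝ S :=
      hX.sigmaVonNBounded ((Cp X).subtype.comp S.subtype)
        (IsInducing.subtypeVal.comp IsInducing.subtypeVal) fun g => (g : Cp X).2
    exact not_sigmaVonNBounded_nat_real (hS.of_surjective e e.surjective)
  tfae_have 4 → 1 := fun ⟨T, hT⟩ hX =>
    not_sigmaVonNBounded_nat_real <|
      (hX.sigmaVonNBounded (Cp X).subtype IsInducing.subtypeVal fun g => g.2).of_surjective T hT
  tfae_finish

/-- For a Tychonoff space `X` the following are equivalent: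
(1) `X` is not pseudocompact;
(2) `C_p(X)` has a linear subspace linearly homeomorphic to `ℝ^ℕ`;
(3) `C_p(X)` has a quotient by a linear subspace linearly homeomorphic to `ℝ^ℕ`;
(4) there is a continuous linear surjection from `C_p(X)` onto `ℝ^ℕ`. -/
theorem cp_not_pseudocompact_tfae (X : Type*) [TopologicalSpace X]
    [T2Space X] [CompletelyRegularSpace X] :
    List.TFAE
      [¬ Pseudocompact X,
       ∃ S : Submodule ℝ (Cp X), Nonempty (S ≃L[ℝ] (ℕ → ℝ)),
       ∃ Z : Submodule ℝ (Cp X), Nonempty ((Cp X ⧸ Z) ≃L[ℝ] (ℕ → ℝ)),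
       ∃ T : Cp X →L[ℝ] (ℕ → ℝ), Function.Surjective T] :=
  cp_not_pseudocompact_tfae_general X
end

section
/- The topological vector space ℝ^ℕ (with the product topology) is not σ-bounded: it cannot be written as a countable union of von Neumann bounded subsets. -/
/-!
A von Neumann bounded subset of a product has bounded coordinate projections, so if
`ℝ^ℕ = ⋃ n, B n` then each `B n` has its `n`-th coordinate bounded by some `r n`. A point whose
`n`-th coordinate exceeds `r n` for every `n` then lies in no `B n` — Cantor's diagonal argument.
-/

open Set Function Bornology

theorem iUnion_ne_univ_of_bddAbove_image_eval {ι α : Type*} [Preorder α] [NoMaxOrder α]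
    (B : ι → Set (ι → α)) (hB : ∀ i, BddAbove (eval i '' B i)) : ⋃ i, B i ≠ univ := by
  choose r hr using hB
  choose x hx using fun i => exists_gt (r i)
  intro hcover
  obtain ⟨i, hxi⟩ := mem_iUnion.1 (hcover ▸ mem_univ x)
  exact (hx i).not_ge (hr i (mem_image_of_mem _ hxi))

theorem Bornology.IsVonNBounded.bddAbove_image_eval {ι : Type*} {S : Set (ι → ℝ)}
    (hS : IsVonNBounded ℝ S) (i : ι) : BddAbove (eval i '' S) :=
  ((NormedSpace.isVonNBounded_iff ℝ).1 (isVonNBounded_pi_iff.1 hS i)).bddAbove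

/-- The topological vector space `ℝ^ℕ` (with the product topology) is not σ-bounded:
it is not a countable union of von Neumann bounded subsets. -/
theorem pi_real_not_sigma_bounded :
    ¬ ∃ B : ℕ → Set (ℕ → ℝ),
        (∀ n, Bornology.IsVonNBounded ℝ (B n)) ∧ (⋃ n, B n) = Set.univ := by
  rintro ⟨B, hB, hcover⟩
  exact iUnion_ne_univ_of_bddAbove_image_eval B (fun n => (hB n).bddAbove_image_eval n) hcover
end

section
/- Let X be a pseudocompact Tychonoff space containing an infinite discrete C*-embedded subspace D, and let (F_n)_{n=1}^∞ be a sequence of non-empty, finite, pairwise disjoint subsets of D with lim_{n→∞} |F_n| = ∞. Let Z = ⋂_{n=1}^∞ {f ∈ C_p(X) : Σ_{x∈F_n} f(x) = 0}. Then the quotient space C_p(X)/Z is linearly homeomorphic to the subspace ℓ∞ = {x ∈ ℝ^ℕ : sup_n |x_n| < ∞} of ℝ^ℕ. In particular, C_p(X) has an infinite-dimensional metrizable quotient. -/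
open Topology Filter

/-- `ℓ∞`, the linear subspace of bounded sequences of `ℝ^ℕ`
(with the subspace topology inherited from the product topology). -/
def ellInfty : Submodule ℝ (ℕ → ℝ) where
  carrier := {x | ∃ C, ∀ n, |x n| ≤ C}
  add_mem' := by
    rintro x y ⟨C, hC⟩ ⟨D, hD⟩
    exact ⟨C + D, fun n => (abs_add_le _ _).trans (add_le_add (hC n) (hD n))⟩
  zero_mem' := ⟨0, fun n => by simp⟩
  smul_mem' := by
    rintro c x ⟨C, hC⟩
    refine ⟨|c| * C, fun n => ?_⟩
    rw [Pi.smul_apply, smul_eq_mul, abs_mul]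
    exact mul_le_mul_of_nonneg_left (hC n) (abs_nonneg c)

/-- A subset `D` of a topological space `X` is `C*`-embedded if every bounded
continuous real-valued function on `D` (with the subspace topology) extends
continuously to `X`. -/
def CStarEmbedded {X : Type*} [TopologicalSpace X] (D : Set X) : Prop :=
  ∀ f : D → ℝ, Continuous f → (∃ C, ∀ x, |f x| ≤ C) →
    ∃ g : X → ℝ, Continuous g ∧ ∀ x : D, g x = f x

/-- The linear subspace `Z = ⋂ₙ {f ∈ C_p(X) : Σ_{x ∈ Fₙ} f(x) = 0}` of `C_p(X)`. -/
def sumZeroSubmodule {X : Type*} [TopologicalSpace X] (F : ℕ → Finset X) :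
    Submodule ℝ (Cp X) where
  carrier := {f | ∀ n, ∑ x ∈ F n, (f : X → ℝ) x = 0}
  zero_mem' := by intro n; simp
  add_mem' := by
    intro f g hf hg n
    simp only [Submodule.coe_add, Pi.add_apply, Finset.sum_add_distrib, hf n, hg n, add_zero]
  smul_mem' := by
    intro c f hf n
    simp only [Submodule.coe_smul, Pi.smul_apply, smul_eq_mul, ← Finset.mul_sum, hf n, mul_zero]

/-!
The averaging map `f ↦ (|Fₙ|⁻¹ ∑_{x ∈ Fₙ} f x)ₙ` is a continuous linear map from `C_p(X)` onto
`ℓ∞` (bounded by pseudocompactness) with kernel `Z`, so it suffices to show that it is open: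
given a finite `A ⊆ X` and `b ∈ ℓ∞` that is small on the finitely many `n` with `|Fₙ| < 2^|A|`,
we need a continuous `f`, small on `A`, with averages `b`. Since `D` is discrete and
`C*`-embedded, each trace filter `𝓝[D] a` decides every subset of `X`, so halving every `Fₙ`
once per point of `A` yields `Eₙ ⊆ Fₙ` with `|Fₙ| + 1 ≤ 2^|A| (|Eₙ| + 1)` whose union avoids a
trace neighbourhood of each `a ∈ A`. Putting the whole mass of each large block on `Eₙ` gives a
bounded function on `D`; its continuous extension is small on `A ∩ closure D`, and a function
from complete regularity that vanishes on `A \ closure D` and is `1` on `closure D` repairs it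
on the rest of `A`.
-/

open Finset Function

section Gluing

variable {ι α β : Type*} [Zero β]

theorem exists_eqOn_of_pairwise_disjoint (s : ι → Set α) (hs : Pairwise (Disjoint on s))
    (w : ι → α → β) :
    ∃ u : α → β, (∀ i, Set.EqOn u (w i) (s i)) ∧ Set.EqOn u 0 (⋃ i, s i)ᶜ := by
  classical
  refine ⟨fun x => if h : ∃ i, x ∈ s i then w h.choose x else 0, fun i x hx => ?_,
    fun x hx => dif_neg (by simpa using hx)⟩
  have h : ∃ j, x ∈ s j := ⟨i, hx⟩
  obtain rfl : h.choose = i := hs.eq (Set.not_disjoint_iff.2 ⟨x, h.choose_spec, hx⟩)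
  exact dif_pos h

end Gluing

theorem exists_continuous_zero_one_of_finset {X : Type*} [TopologicalSpace X]
    [CompletelyRegularSpace X] (s : Finset X) {t : Set X} (ht : IsClosed t)
    (hd : Disjoint (s : Set X) t) :
    ∃ f : X → ℝ, Continuous f ∧ Set.EqOn f 0 s ∧ Set.EqOn f 1 t := by
  have : ∀ a ∈ s, ∃ g : X → ℝ, Continuous g ∧ g a = 0 ∧ Set.EqOn g 1 t := fun a ha => by
    obtain ⟨g, hg, hga, hgt⟩ :=
      CompletelyRegularSpace.completely_regular a t ht (hd.notMem_of_mem_left ha)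
    exact ⟨fun x => g x, continuous_subtype_val.comp hg, by simp [hga],
      fun x hx => by simp [hgt hx]⟩
  choose! g hg hga hgt using this
  exact ⟨fun x => ∏ a ∈ s, g a x, continuous_finsetProd _ hg,
    fun x hx => prod_eq_zero hx (hga x hx), fun x hx => prod_eq_one fun a ha => hgt a ha hx⟩

theorem exists_finset_setOf_forall_abs_le_subset {ι : Type*} {U : Set (ι → ℝ)}
    (hU : U ∈ 𝓝 0) : ∃ A : Finset ι, ∃ ε > 0, {f | ∀ a ∈ A, |f a| ≤ ε} ⊆ U := by
  obtain ⟨A, t, ht, hAt⟩ := mem_pi'.1 (nhds_pi (a := (0 : ι → ℝ)) ▸ hU)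
  have hsmall : ∀ᶠ r in 𝓝 (0 : ℝ), ∀ a ∈ A, Metric.closedBall 0 r ⊆ t a :=
    (eventually_all_finset A).2 fun a _ => eventually_closedBall_subset (ht a)
  obtain ⟨ε, hεt, hε⟩ :=
    ((hsmall.filter_mono nhdsWithin_le_nhds).and (self_mem_nhdsWithin (s := Set.Ioi 0))).exists
  refine ⟨A, ε, hε, fun f hf => hAt fun a ha => hεt a ha ?_⟩
  simpa using hf a ha

section Halving

variable {ι X : Type*}

theorem exists_subfamily_compl_iUnion_mem {G : Filter X} (hG : ∀ S : Set X, S ∈ G ∨ Sᶜ ∈ G)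
    (E : ι → Finset X) (hE : Pairwise (Disjoint on E)) :
    ∃ E' : ι → Finset X, (∀ i, E' i ⊆ E i) ∧ (∀ i, #(E i) + 1 ≤ 2 * (#(E' i) + 1)) ∧
      (⋃ i, (E' i : Set X))ᶜ ∈ G := by
  classical
  choose t htE hcard using fun i => exists_subset_card_eq (Nat.div_le_self #(E i) 2)
  rcases hG (⋃ i, (t i : Set X)) with ht | ht
  · refine ⟨fun i => E i \ t i, fun i => sdiff_subset, fun i => ?_, mem_of_superset ht ?_⟩
    · rw [card_sdiff_of_subset (htE i), hcard i]
      omega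
    · simp only [Set.subset_def, Set.mem_iUnion, Set.mem_compl_iff, not_exists, coe_sdiff,
        Set.mem_sdiff, mem_coe, not_and, not_not]
      rintro x ⟨i, hxi⟩ j hxj
      obtain rfl : j = i := hE.eq (not_disjoint_iff.2 ⟨x, hxj, htE i hxi⟩)
      exact hxi
  · exact ⟨t, htE, fun i => by rw [hcard i]; omega, ht⟩

theorem exists_subfamily_compl_iUnion_mem_forall {κ : Type*} {G : κ → Filter X}
    (hG : ∀ k (S : Set X), S ∈ G k ∨ Sᶜ ∈ G k) (A : Finset κ)
    (E : ι → Finset X) (hE : Pairwise (Disjoint on E)) :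
    ∃ E' : ι → Finset X, (∀ i, E' i ⊆ E i) ∧ (∀ i, #(E i) + 1 ≤ 2 ^ #A * (#(E' i) + 1)) ∧
      ∀ k ∈ A, (⋃ i, (E' i : Set X))ᶜ ∈ G k := by
  classical
  induction A using Finset.induction_on generalizing E with
  | empty => exact ⟨E, fun _ => subset_rfl, by simp, by simp⟩
  | insert k A hk ih =>
    obtain ⟨E₁, hE₁, hcard₁, hk₁⟩ := exists_subfamily_compl_iUnion_mem (hG k) E hE
    obtain ⟨E', hE', hcard', hA'⟩ :=
      ih E₁ (hE.mono fun i j h => h.mono (hE₁ i) (hE₁ j))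
    refine ⟨E', fun i => (hE' i).trans (hE₁ i), fun i => ?_, ?_⟩
    · rw [card_insert_of_notMem hk, pow_succ']
      calc #(E i) + 1 ≤ 2 * (#(E₁ i) + 1) := hcard₁ i
        _ ≤ 2 * (2 ^ #A * (#(E' i) + 1)) := Nat.mul_le_mul_left 2 (hcard' i)
        _ = _ := by ring
    · intro k' hk'
      rcases mem_insert.1 hk' with rfl | hk'
      · exact mem_of_superset hk₁
          (Set.compl_subset_compl.2 (Set.iUnion_mono fun i => coe_subset.2 (hE' i)))
      · exact hA' k' hk'

end Halving

namespace CStarEmbedded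

variable {X : Type*} [TopologicalSpace X] {D : Set X} [DiscreteTopology D]

theorem exists_continuous_eqOn (hD : CStarEmbedded D) {u : X → ℝ} {C : ℝ}
    (hu : ∀ x ∈ D, |u x| ≤ C) : ∃ f : X → ℝ, Continuous f ∧ Set.EqOn f u D := by
  obtain ⟨f, hf, hfu⟩ := hD (D.domRestrict u) continuous_of_discreteTopology ⟨C, fun x => hu x x.2⟩
  exact ⟨f, hf, fun x hx => hfu ⟨x, hx⟩⟩

theorem mem_nhdsWithin_or_compl_mem (hD : CStarEmbedded D) (a : X) (S : Set X) :
    S ∈ 𝓝[D] a ∨ Sᶜ ∈ 𝓝[D] a := by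
  obtain ⟨f, hf, hfS⟩ := hD.exists_continuous_eqOn (u := S.indicator 1) (C := 1)
    fun x _ => by by_cases hx : x ∈ S <;> simp [hx]
  rcases lt_or_ge (f a) (1 / 2) with ha | ha
  · right
    filter_upwards [nhdsWithin_le_nhds (hf.continuousAt.eventually_lt_const ha),
      self_mem_nhdsWithin] with x hx hxD hxS
    rw [hfS hxD, Set.indicator_of_mem hxS] at hx
    norm_num at hx
  · left
    filter_upwards [nhdsWithin_le_nhds (hf.continuousAt.eventually_const_lt
      (by linarith : (0 : ℝ) < f a)), self_mem_nhdsWithin] with x hx hxD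
    by_contra hxS
    rw [hfS hxD, Set.indicator_of_notMem hxS] at hx
    exact lt_irrefl 0 hx

end CStarEmbedded

section BlockWeight

variable {X : Type*}

noncomputable def blockWeight (F E : Finset X) (β : ℝ) : X → ℝ :=
  if E.Nonempty then (E : Set X).indicator fun _ => #F / #E * β else fun _ => β

theorem sum_blockWeight {F E : Finset X} (hEF : E ⊆ F) (β : ℝ) :
    ∑ x ∈ F, blockWeight F E β x = #F * β := by
  rcases E.eq_empty_or_nonempty with rfl | hE
  · simp [blockWeight]
  · rw [blockWeight, if_pos hE, sum_indicator_subset _ hEF, sum_const, nsmul_eq_mul]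
    field_simp [hE.card_pos.ne']

theorem abs_blockWeight_le {F E : Finset X} {P : ℕ} (hP : #F + 1 ≤ P * (#E + 1))
    (β : ℝ) (x : X) : |blockWeight F E β x| ≤ 2 * P * |β| := by
  rcases E.eq_empty_or_nonempty with rfl | hE
  · have : (1 : ℝ) ≤ P := by
      norm_cast
      simp only [card_empty, zero_add, mul_one] at hP
      omega
    simp only [blockWeight, Finset.not_nonempty_empty, if_false]
    nlinarith [abs_nonneg β]
  · have hFE : (#F : ℝ) ≤ 2 * P * #E := by
      have := hE.card_pos
      exact_mod_cast (by nlinarith : #F ≤ 2 * P * #E)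
    simp only [blockWeight, if_pos hE]
    by_cases hx : x ∈ E
    · rw [Set.indicator_of_mem (mem_coe.2 hx), abs_mul, abs_div, Nat.abs_cast, Nat.abs_cast]
      gcongr
      rw [div_le_iff₀ (by exact_mod_cast hE.card_pos)]
      exact hFE
    · rw [Set.indicator_of_notMem (by simpa using hx), abs_zero]
      positivity

theorem abs_blockWeight_le_of_notMem {F E : Finset X} {P : ℕ} (hP : #F + 1 ≤ P * (#E + 1))
    {β ε : ℝ} (hε : 0 ≤ ε) (hβ : #F < P → |β| ≤ ε) {x : X} (hx : x ∉ E) :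
    |blockWeight F E β x| ≤ ε := by
  rcases E.eq_empty_or_nonempty with rfl | hE
  · simpa [blockWeight] using hβ (by simpa using hP)
  · simpa [blockWeight, hE, hx] using hε

end BlockWeight

theorem exists_continuous_eqOn_abs_le_of_eventually {X : Type*} [TopologicalSpace X]
    [CompletelyRegularSpace X] {D : Set X} {f : X → ℝ} (hf : Continuous f) (A : Finset X)
    {ε : ℝ} (hε : 0 ≤ ε) (hA : ∀ a ∈ A, ∀ᶠ x in 𝓝[D] a, |f x| ≤ ε) :
    ∃ g : X → ℝ, Continuous g ∧ Set.EqOn g f D ∧ ∀ a ∈ A, |g a| ≤ ε := by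
  classical
  obtain ⟨φ, hφ, hφA, hφD⟩ := exists_continuous_zero_one_of_finset
    (A.filter (· ∉ closure D)) isClosed_closure
    (Set.disjoint_left.2 fun a ha => (mem_filter.1 ha).2)
  refine ⟨φ * f, hφ.mul hf, fun x hx => by simp [hφD (subset_closure hx)], fun a ha => ?_⟩
  by_cases haD : a ∈ closure D
  · have := mem_closure_iff_nhdsWithin_neBot.1 haD
    simpa [hφD haD] using
      le_of_tendsto (hf.abs.continuousAt.tendsto.mono_left nhdsWithin_le_nhds) (hA a ha)
  · simpa [hφA (mem_filter.2 ⟨ha, haD⟩)] using hε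

namespace CStarEmbedded

variable {X : Type*} [TopologicalSpace X] {D : Set X} [DiscreteTopology D]
  {F : ℕ → Finset X} {ε C : ℝ} {b : ℕ → ℝ}

theorem exists_continuous_sum_eq_of_eventually (hD : CStarEmbedded D)
    (hFD : ∀ n, ↑(F n) ⊆ D) (hF : Pairwise (Disjoint on F)) (A : Finset X)
    (hε : 0 ≤ ε) (hb : ∀ n, |b n| ≤ C) (hsmall : ∀ n, #(F n) < 2 ^ #A → |b n| ≤ ε) :
    ∃ f : X → ℝ, Continuous f ∧ (∀ n, ∑ x ∈ F n, f x = #(F n) * b n) ∧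
      ∀ a ∈ A, ∀ᶠ x in 𝓝[D] a, |f x| ≤ ε := by
  obtain ⟨E, hEF, hcard, hEA⟩ :=
    exists_subfamily_compl_iUnion_mem_forall hD.mem_nhdsWithin_or_compl_mem A F hF
  obtain ⟨u, hu, hu0⟩ := exists_eqOn_of_pairwise_disjoint (fun n => (F n : Set X))
    (hF.mono fun _ _ h => disjoint_coe.2 h) fun n => blockWeight (F n) (E n) (b n)
  have hC : 0 ≤ C := (abs_nonneg _).trans (hb 0)
  obtain ⟨f, hf, hfu⟩ := hD.exists_continuous_eqOn (u := u) (C := 2 * 2 ^ #A * C) fun x _ => by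
    by_cases hx : ∃ n, x ∈ F n
    · obtain ⟨n, hxn⟩ := hx
      rw [hu n hxn]
      exact (abs_blockWeight_le (hcard n) _ x).trans (by push_cast; gcongr; exact hb n)
    · rw [hu0 (by simpa using hx)]
      simp only [Pi.zero_apply, abs_zero]
      positivity
  refine ⟨f, hf, fun n => ?_, fun a ha => ?_⟩
  · rw [sum_congr rfl fun x hx => (hfu (hFD n hx)).trans (hu n hx)]
    exact sum_blockWeight (hEF n) (b n)
  · filter_upwards [hEA a ha, self_mem_nhdsWithin] with x hxE hxD
    rw [hfu hxD]
    by_cases hx : ∃ n, x ∈ F n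
    · obtain ⟨n, hxn⟩ := hx
      rw [hu n hxn]
      exact abs_blockWeight_le_of_notMem (hcard n) hε (by exact_mod_cast hsmall n)
        fun h => hxE (Set.mem_iUnion.2 ⟨n, h⟩)
    · simpa [hu0 (by simpa using hx)] using hε

theorem exists_continuous_sum_eq [CompletelyRegularSpace X] (hD : CStarEmbedded D)
    (hFD : ∀ n, ↑(F n) ⊆ D) (hF : Pairwise (Disjoint on F)) (A : Finset X)
    (hε : 0 ≤ ε) (hb : ∀ n, |b n| ≤ C) (hsmall : ∀ n, #(F n) < 2 ^ #A → |b n| ≤ ε) :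
    ∃ f : X → ℝ, Continuous f ∧ (∀ n, ∑ x ∈ F n, f x = #(F n) * b n) ∧
      ∀ a ∈ A, |f a| ≤ ε := by
  obtain ⟨f₀, hf₀, hsum, hA⟩ := hD.exists_continuous_sum_eq_of_eventually hFD hF A hε hb hsmall
  obtain ⟨f, hf, hfD, hfA⟩ := exists_continuous_eqOn_abs_le_of_eventually hf₀ A hε hA
  exact ⟨f, hf, fun n => (sum_congr rfl fun x hx => hfD (hFD n hx)).trans (hsum n), hfA⟩

end CStarEmbedded

section BlockAverage

variable {X : Type*} (F : ℕ → Finset X)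

noncomputable def blockAverage : (X → ℝ) →L[ℝ] (ℕ → ℝ) :=
  ContinuousLinearMap.pi fun n => (#(F n) : ℝ)⁻¹ • ∑ x ∈ F n, ContinuousLinearMap.proj x

variable {F}

@[simp]
theorem blockAverage_apply (f : X → ℝ) (n : ℕ) :
    blockAverage F f n = (#(F n) : ℝ)⁻¹ * ∑ x ∈ F n, f x := by
  simp [blockAverage]

theorem blockAverage_eq_iff (hF : ∀ n, (F n).Nonempty) {f : X → ℝ}
    {y : ℕ → ℝ} : blockAverage F f = y ↔ ∀ n, ∑ x ∈ F n, f x = #(F n) * y n := by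
  simp only [funext_iff, blockAverage_apply]
  exact forall_congr' fun n => inv_mul_eq_iff_eq_mul₀ (by exact_mod_cast (hF n).card_pos.ne')

theorem blockAverage_mem_ellInfty (hF : ∀ n, (F n).Nonempty)
    {f : X → ℝ} {C : ℝ} (hf : ∀ x, |f x| ≤ C) : blockAverage F f ∈ ellInfty := by
  refine ⟨C, fun n => ?_⟩
  have hpos : (0 : ℝ) < #(F n) := by exact_mod_cast (hF n).card_pos
  rw [blockAverage_apply, abs_mul, abs_inv, Nat.abs_cast, inv_mul_le_iff₀ hpos]
  calc |∑ x ∈ F n, f x| ≤ ∑ x ∈ F n, |f x| := abs_sum_le_sum_abs _ _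
    _ ≤ #(F n) • C := sum_le_card_nsmul _ _ _ fun x _ => hf x
    _ = #(F n) * C := nsmul_eq_mul _ _

end BlockAverage

namespace Cp

variable {X : Type*} [TopologicalSpace X] {F : ℕ → Finset X}

noncomputable def blockAverage (hX : Pseudocompact X) (hF : ∀ n, (F n).Nonempty) :
    Cp X →L[ℝ] ellInfty :=
  (_root_.blockAverage F ∘L (Cp X).subtypeL).codRestrict ellInfty fun f =>
    blockAverage_mem_ellInfty hF (hX f f.2).choose_spec

variable (hX : Pseudocompact X) (hF : ∀ n, (F n).Nonempty)

theorem blockAverage_eq_iff {f : Cp X} {y : ellInfty} :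
    blockAverage hX hF f = y ↔ ∀ n, ∑ x ∈ F n, (f : X → ℝ) x = #(F n) * (y : ℕ → ℝ) n :=
  Subtype.ext_iff.trans (_root_.blockAverage_eq_iff hF)

theorem ker_blockAverage :
    LinearMap.ker (blockAverage hX hF).toLinearMap = sumZeroSubmodule F := by
  ext f
  simp [LinearMap.mem_ker, blockAverage_eq_iff, sumZeroSubmodule]

variable [CompletelyRegularSpace X] {D : Set X} [DiscreteTopology D]

theorem blockAverage_surjective (hD : CStarEmbedded D) (hFD : ∀ n, ↑(F n) ⊆ D)
    (hFdisj : Pairwise (Disjoint on F)) : Function.Surjective (blockAverage hX hF) := by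
  rintro ⟨y, C, hC⟩
  obtain ⟨f, hf, hsum, -⟩ := hD.exists_continuous_sum_eq hFD hFdisj ∅
    ((abs_nonneg _).trans (hC 0)) hC fun n _ => hC n
  exact ⟨⟨f, hf⟩, (blockAverage_eq_iff hX hF).2 hsum⟩

theorem isOpenMap_blockAverage (hD : CStarEmbedded D) (hFD : ∀ n, ↑(F n) ⊆ D)
    (hFdisj : Pairwise (Disjoint on F)) (hFcard : Tendsto (fun n => #(F n)) atTop atTop) :
    IsOpenMap (blockAverage hX hF) := by
  rw [IsTopologicalAddGroup.isOpenMap_iff_nhds_zero, le_map_iff]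
  intro U hU
  obtain ⟨V, hV, hVU⟩ := (mem_nhds_subtype _ _ _).1 hU
  obtain ⟨A, ε, hε, hAV⟩ := exists_finset_setOf_forall_abs_le_subset hV
  have hN : {n | #(F n) < 2 ^ #A}.Finite := by
    simpa [← Nat.cofinite_eq_atTop] using hFcard.eventually_ge_atTop (2 ^ #A)
  have hnhds : ∀ᶠ y : ellInfty in 𝓝 0, ∀ n ∈ {n | #(F n) < 2 ^ #A}, |(y : ℕ → ℝ) n| ≤ ε :=
    (eventually_all_finite hN).2 fun n _ =>
      ((continuous_apply n).comp continuous_subtype_val).abs.continuousAt.eventually_le_const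
        (by simpa using hε)
  refine mem_of_superset hnhds fun y hy => ?_
  obtain ⟨C, hC⟩ := y.2
  obtain ⟨f, hf, hsum, hfA⟩ := hD.exists_continuous_sum_eq hFD hFdisj A hε.le hC hy
  exact ⟨⟨f, hf⟩, hVU (hAV hfA), (blockAverage_eq_iff hX hF).2 hsum⟩

end Cp

namespace ContinuousLinearMap

variable {R M N : Type*} [Ring R] [AddCommGroup M] [Module R M] [TopologicalSpace M]
  [IsTopologicalAddGroup M] [AddCommGroup N] [Module R N] [TopologicalSpace N]

noncomputable def quotKerEquivOfIsOpenMap (φ : M →L[R] N) (hsurj : Function.Surjective φ)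
    (hopen : IsOpenMap φ) : (M ⧸ LinearMap.ker φ.toLinearMap) ≃L[R] N :=
  let e := φ.toLinearMap.quotKerEquivOfSurjective hsurj
  have hmkQ := (LinearMap.ker φ.toLinearMap).isOpenQuotientMap_mkQ
  have hcont : Continuous e := hmkQ.isQuotientMap.continuous_iff.2 φ.continuous
  have hopen' : IsOpenMap e := fun U hU => by
    rw [← Set.image_preimage_eq U hmkQ.surjective, ← Set.image_comp]
    exact hopen _ (hU.preimage hmkQ.continuous)
  { e with
    continuous_toFun := hcont
    continuous_invFun := (e.toEquiv.toHomeomorphOfContinuousOpen hcont hopen').symm.continuous }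

end ContinuousLinearMap

instance : TopologicalSpace.MetrizableSpace ellInfty :=
  IsEmbedding.subtypeVal.metrizableSpace

theorem not_finiteDimensional_ellInfty : ¬ FiniteDimensional ℝ ellInfty := by
  have hsingle (i : ℕ) : (Pi.single i 1 : ℕ → ℝ) ∈ ellInfty :=
    ⟨1, fun n => by rcases eq_or_ne n i with rfl | h <;> simp [*]⟩
  intro
  exact Module.Finite.not_linearIndependent_of_infinite (fun i => (⟨_, hsingle i⟩ : ellInfty))
    (.of_comp ellInfty.subtype (Pi.linearIndependent_single_one ℕ ℝ))

theorem cp_quotient_ellInfty_of_discrete_cstar_embedded_general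
    (X : Type*) [TopologicalSpace X] [CompletelyRegularSpace X]
    (hX : Pseudocompact X)
    (D : Set X) [DiscreteTopology D] (hD : CStarEmbedded D)
    (F : ℕ → Finset X)
    (hFne : ∀ n, (F n).Nonempty)
    (hFD : ∀ n, ↑(F n) ⊆ D)
    (hFdisj : ∀ m n, m ≠ n → Disjoint (F m) (F n))
    (hFcard : Filter.Tendsto (fun n => (F n).card) Filter.atTop Filter.atTop) :
    Nonempty ((Cp X ⧸ sumZeroSubmodule F) ≃L[ℝ] ellInfty) ∧
    TopologicalSpace.MetrizableSpace (Cp X ⧸ sumZeroSubmodule F) ∧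
    ¬ FiniteDimensional ℝ (Cp X ⧸ sumZeroSubmodule F) := by
  have e := (Cp.blockAverage hX hFne).quotKerEquivOfIsOpenMap
    (Cp.blockAverage_surjective hX hFne hD hFD hFdisj)
    (Cp.isOpenMap_blockAverage hX hFne hD hFD hFdisj hFcard)
  rw [Cp.ker_blockAverage] at e
  exact ⟨⟨e⟩, e.toHomeomorph.isEmbedding.metrizableSpace,
    fun _ => not_finiteDimensional_ellInfty (Module.Finite.equiv e.toLinearEquiv)⟩

/-- **Theorem 5 of the paper.** If a pseudocompact Tychonoff space `X` contains an
infinite, discrete, `C*`-embedded subspace `D`, and `(Fₙ)` is a sequence of nonempty,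
finite, pairwise disjoint subsets of `D` with `|Fₙ| → ∞`, then for
`Z = ⋂ₙ {f ∈ C_p(X) : Σ_{x ∈ Fₙ} f(x) = 0}` the quotient `C_p(X)/Z` is linearly
homeomorphic to the subspace `ℓ∞` of `ℝ^ℕ`; in particular it is an
infinite-dimensional metrizable quotient of `C_p(X)`. -/
theorem cp_quotient_ellInfty_of_discrete_cstar_embedded
    (X : Type*) [TopologicalSpace X] [T2Space X] [CompletelyRegularSpace X]
    (hX : Pseudocompact X)
    (D : Set X) (hDinf : D.Infinite) [DiscreteTopology D] (hD : CStarEmbedded D)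
    (F : ℕ → Finset X)
    (hFne : ∀ n, (F n).Nonempty)
    (hFD : ∀ n, ↑(F n) ⊆ D)
    (hFdisj : ∀ m n, m ≠ n → Disjoint (F m) (F n))
    (hFcard : Filter.Tendsto (fun n => (F n).card) Filter.atTop Filter.atTop) :
    Nonempty ((Cp X ⧸ sumZeroSubmodule F) ≃L[ℝ] ellInfty) ∧
    TopologicalSpace.MetrizableSpace (Cp X ⧸ sumZeroSubmodule F) ∧
    ¬ FiniteDimensional ℝ (Cp X ⧸ sumZeroSubmodule F) :=
  cp_quotient_ellInfty_of_discrete_cstar_embedded_general X hX D hD F hFne hFD hFdisj hFcard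
end

section
/- For every infinite discrete topological space D there exists a linear subspace Z of C_p(βD), where βD is the Stone–Čech compactification of D, such that the quotient space C_p(βD)/Z is linearly homeomorphic to the subspace ℓ∞ = {x ∈ ℝ^ℕ : sup_n |x_n| < ∞} of ℝ^ℕ. -/
/-!
Fix distinct points `d (n, m)` of `D` and let
`T f n = f (d (n, 0)) - mean_{j < (n+1)!} f (d (n, j + 1))`. Then `T : C_p(βD) → ℓ∞` is
continuous and linear, and `C_p(βD) / ker T ≅ ℓ∞` once `T` is open and onto. Both follow from: if
`F ⊆ βD` has `k` points and `|x n| ≤ ε` for `n < k`, then `T f = x` for some `f` with `|f| ≤ ε`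
on `F`. For `n ≥ k`, the indices `j < (n+1)!` of row `n` fall into `k + 1` residue classes
mod `k + 1` of equal size, so putting `-(k + 1) x n` on one class and `0` on the others gives row
mean `-x n`. The classes are disjoint, so each point of `βD` lies in the closure of the complement
of all classes but at most one; hence some class has all of `F` in the closure of its complement,
where `f` takes only the values `0` and `-x n` (`n < k`).
-/

open Topology Filter

open Finset Function
open scoped Nat

noncomputable def LinearMap.quotKerEquivOfIsOpenQuotientMap {R M N : Type*} [Ring R]
    [AddCommGroup M] [Module R M] [TopologicalSpace M]
    [AddCommGroup N] [Module R N] [TopologicalSpace N]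
    (f : M →ₗ[R] N) (hf : IsOpenQuotientMap f) : (M ⧸ LinearMap.ker f) ≃L[R] N where
  toLinearEquiv := f.quotKerEquivOfSurjective hf.surjective
  continuous_toFun := (LinearMap.ker f).isQuotientMap_mkQ.continuous_iff.2 hf.continuous
  continuous_invFun := by
    refine hf.isQuotientMap.continuous_iff.2 ?_
    convert (LinearMap.ker f).isQuotientMap_mkQ.continuous using 1
    ext x
    exact f.quotKerEquivOfSurjective_symm_apply hf.surjective x

theorem exists_forall_mem_closure_image_compl {X α ι : Type*} [TopologicalSpace X] [Fintype ι]
    {f : α → X} (hf : DenseRange f) {S : ι → Set α} (hS : Pairwise (Disjoint on S))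
    (F : Finset X) (hF : #F < Fintype.card ι) :
    ∃ i, ∀ z ∈ F, z ∈ closure (f '' (S i)ᶜ) := by
  by_contra! h
  choose z hzF hz using h
  have hcover (i : ι) : closure (f '' S i) ∪ closure (f '' (S i)ᶜ) = Set.univ := by
    rw [← closure_union, ← Set.image_union, Set.union_compl_self, Set.image_univ,
      hf.closure_range]
  -- `z i` avoids `closure (f '' (S i)ᶜ)`, so it lies in `closure (f '' S i)`, which is contained in
  -- `closure (f '' (S i')ᶜ)` for every `i' ≠ i`.
  have hinj : Injective z := by
    intro i i' hii'
    by_contra hne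
    have hsub : closure (f '' S i') ⊆ closure (f '' (S i)ᶜ) :=
      closure_mono (Set.image_mono fun a ha ha' => (hS hne).le_bot ⟨ha', ha⟩)
    rcases hcover i' ▸ Set.mem_univ (z i') with h | h
    · exact hz i (hii' ▸ hsub h)
    · exact hz i' h
  have := card_le_card_of_injOn (s := univ) z (fun i _ => hzF i) hinj.injOn
  rw [card_univ] at this
  omega

theorem exists_continuous_stoneCech_extension {Y : Type*} [TopologicalSpace Y] {g : Y → ℝ}
    (hg : Continuous g) {M : ℝ} (hM : ∀ y, |g y| ≤ M) :
    ∃ f : StoneCech Y → ℝ, Continuous f ∧ ∀ y, f (stoneCechUnit y) = g y := by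
  let g' : Y → Set.Icc (-M) M := fun y => ⟨g y, abs_le.1 (hM y)⟩
  have hg' : Continuous g' := hg.subtype_mk _
  refine ⟨fun z => ((stoneCechExtend hg' z : Set.Icc (-M) M) : ℝ), continuous_subtype_val.comp
    (continuous_stoneCechExtend hg'), fun y => ?_⟩
  simp [stoneCechExtend_stoneCechUnit hg', g']

theorem card_filter_range_mod_eq {N r i : ℕ} (hrN : r ∣ N) (hi : i < r) :
    #{j ∈ range N | j % r = i} = N / r := by
  have hcount := Nat.count_modEq_card N (i.zero_le.trans_lt hi) i
  rw [Nat.mod_eq_zero_of_dvd hrN, if_neg (Nat.not_lt_zero _), add_zero,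
    Nat.count_eq_card_filter_range] at hcount
  rw [← hcount]
  congr! 2 with j
  rw [Nat.ModEq, Nat.mod_eq_of_lt hi]

theorem ellInfty_setOf_abs_le_mem_nhds_zero (N : ℕ) {ε : ℝ} (hε : 0 < ε) :
    {x : ellInfty | ∀ n < N, |(x : ℕ → ℝ) n| ≤ ε} ∈ 𝓝 (0 : ellInfty) := by
  have h0 : ((Set.Iio N).pi fun _ => Metric.closedBall (0 : ℝ) ε) ∈ 𝓝 ((0 : ellInfty) : ℕ → ℝ) :=
    set_pi_mem_nhds (Set.finite_Iio N) fun n _ => Metric.closedBall_mem_nhds 0 hε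
  simpa [Set.preimage, Set.pi] using continuous_subtype_val.continuousAt.preimage_mem_nhds h0

namespace CpStoneCech

noncomputable def rowDefect : (ℕ × ℕ → ℝ) →L[ℝ] (ℕ → ℝ) :=
  ContinuousLinearMap.pi fun n =>
    ContinuousLinearMap.proj (n, 0) -
      ((n + 1)! : ℝ)⁻¹ • ∑ j ∈ range (n + 1)!, ContinuousLinearMap.proj (n, j + 1)

theorem rowDefect_apply (u : ℕ × ℕ → ℝ) (n : ℕ) :
    rowDefect u n = u (n, 0) - ((n + 1)! : ℝ)⁻¹ * ∑ j ∈ range (n + 1)!, u (n, j + 1) := by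
  simp [rowDefect]

theorem abs_rowDefect_le {u : ℕ × ℕ → ℝ} {C : ℝ} (hu : ∀ q, |u q| ≤ C) (n : ℕ) :
    |rowDefect u n| ≤ 2 * C := by
  have hN : (0 : ℝ) < (n + 1)! := by positivity
  have hsum : |∑ j ∈ range (n + 1)!, u (n, j + 1)| ≤ (n + 1)! * C := by
    calc |∑ j ∈ range (n + 1)!, u (n, j + 1)| ≤ ∑ j ∈ range (n + 1)!, |u (n, j + 1)| :=
          abs_sum_le_sum_abs _ _
      _ ≤ (n + 1)! * C := by
          simpa using sum_le_card_nsmul (range (n + 1)!) _ _ fun j _ => hu (n, j + 1)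
  rw [rowDefect_apply, two_mul]
  refine (abs_sub _ _).trans (add_le_add (hu _) ?_)
  rw [abs_mul, abs_inv, abs_of_pos hN, inv_mul_le_iff₀ hN]
  exact hsum

section defectMap

variable {X : Type*} [TopologicalSpace X] [CompactSpace X]

theorem exists_abs_le_of_continuous {f : X → ℝ} (hf : Continuous f) : ∃ C, ∀ x, |f x| ≤ C := by
  simpa using isCompact_univ.exists_bound_of_continuousOn hf.continuousOn

noncomputable def defectMap (p : ℕ × ℕ → X) : Cp X →L[ℝ] ellInfty :=
  (rowDefect ∘L ContinuousLinearMap.pi (fun q => ContinuousLinearMap.proj (p q)) ∘L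
    (Cp X).subtypeL).codRestrict ellInfty fun f =>
      have ⟨C, hC⟩ := exists_abs_le_of_continuous f.2
      ⟨2 * C, abs_rowDefect_le fun q => hC (p q)⟩

theorem coe_defectMap_apply (p : ℕ × ℕ → X) (f : Cp X) :
    (defectMap p f : ℕ → ℝ) = rowDefect ((f : X → ℝ) ∘ p) :=
  rfl

end defectMap

def piece (k : ℕ) (i : Fin (k + 1)) : Set (ℕ × ℕ) :=
  {q | k ≤ q.1 ∧ q.2 ≠ 0 ∧ (q.2 - 1) % (k + 1) = i}

theorem pairwise_disjoint_piece (k : ℕ) : Pairwise (Disjoint on piece k) := by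
  intro i i' hii'
  rw [onFun, Set.disjoint_left]
  rintro q ⟨-, -, hi⟩ ⟨-, -, hi'⟩
  exact hii' (Fin.ext (hi.symm.trans hi'))

noncomputable def pieceLift (k : ℕ) (i : Fin (k + 1)) (x : ℕ → ℝ) (q : ℕ × ℕ) : ℝ :=
  if q.2 = 0 then 0
  else if q.1 < k then -x q.1
  else if (q.2 - 1) % (k + 1) = i then -(k + 1) * x q.1
  else 0

theorem sum_pieceLift_row (k : ℕ) (i : Fin (k + 1)) (x : ℕ → ℝ) (n : ℕ) :
    ∑ j ∈ range (n + 1)!, pieceLift k i x (n, j + 1) = -((n + 1)! * x n) := by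
  by_cases hn : n < k
  · simp [pieceLift, hn]
  have hdvd : k + 1 ∣ (n + 1)! := Nat.dvd_factorial k.succ_pos (by omega)
  simp only [pieceLift, hn, Nat.add_sub_cancel, Nat.add_one_ne_zero, if_false]
  rw [sum_ite, sum_const_zero, add_zero, sum_const, card_filter_range_mod_eq hdvd i.isLt,
    nsmul_eq_mul, Nat.cast_div hdvd (by positivity)]
  push_cast
  field_simp

theorem rowDefect_pieceLift (k : ℕ) (i : Fin (k + 1)) (x : ℕ → ℝ) :
    rowDefect (pieceLift k i x) = x := by
  ext n
  rw [rowDefect_apply, sum_pieceLift_row, pieceLift, if_pos rfl]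
  field_simp
  ring

theorem abs_pieceLift_le {k : ℕ} {i : Fin (k + 1)} {x : ℕ → ℝ} {C : ℝ} (hx : ∀ n, |x n| ≤ C)
    (q : ℕ × ℕ) : |pieceLift k i x q| ≤ (k + 1) * C := by
  have hC : 0 ≤ C := (abs_nonneg _).trans (hx 0)
  have hk : (0 : ℝ) < k + 1 := by positivity
  have hxC (n : ℕ) : |x n| ≤ (k + 1) * C := (hx n).trans (le_mul_of_one_le_left hC (by simp))
  unfold pieceLift
  split_ifs
  · rw [abs_zero]; exact (abs_nonneg _).trans (hxC 0)
  · rw [abs_neg]; exact hxC q.1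
  · rw [abs_mul, abs_neg, abs_of_pos hk]
    exact mul_le_mul_of_nonneg_left (hx q.1) hk.le
  · rw [abs_zero]; exact (abs_nonneg _).trans (hxC 0)

theorem abs_pieceLift_le_of_notMem {k : ℕ} {i : Fin (k + 1)} {x : ℕ → ℝ} {ε : ℝ} (hε : 0 ≤ ε)
    (hx : ∀ n < k, |x n| ≤ ε) {q : ℕ × ℕ} (hq : q ∉ piece k i) : |pieceLift k i x q| ≤ ε := by
  unfold pieceLift
  split_ifs with h0 hk hi
  · simpa using hε
  · rw [abs_neg]; exact hx _ hk
  · exact absurd ⟨not_lt.1 hk, h0, hi⟩ hq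
  · simpa using hε

section StoneCech

variable {D : Type*} [TopologicalSpace D] [DiscreteTopology D] {e : ℕ × ℕ → D}

theorem exists_defectMap_eq_of_abs_le (he : Injective e) (F : Finset (StoneCech D)) {ε : ℝ}
    (hε : 0 ≤ ε) (x : ellInfty) (hx : ∀ n < #F, |(x : ℕ → ℝ) n| ≤ ε) :
    ∃ f : Cp (StoneCech D), defectMap (stoneCechUnit ∘ e) f = x ∧
      ∀ z ∈ F, |(f : StoneCech D → ℝ) z| ≤ ε := by
  obtain ⟨C, hC⟩ := x.2
  obtain ⟨i, hi⟩ := exists_forall_mem_closure_image_compl denseRange_stoneCechUnit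
    (fun i i' hii' => (Set.disjoint_image_iff he).2 (pairwise_disjoint_piece #F hii')) F
    (by simp)
  set u := pieceLift #F i x
  have hu : ∀ q, |u q| ≤ (#F + 1) * C := abs_pieceLift_le hC
  have hbound (d : D) : |extend e u 0 d| ≤ (#F + 1) * C := by
    by_cases hd : ∃ q, e q = d
    · obtain ⟨q, rfl⟩ := hd
      exact (he.extend_apply u 0 q).symm ▸ hu q
    · rw [extend_apply' _ _ _ hd, Pi.zero_apply, abs_zero]
      exact (abs_nonneg _).trans (hu 0)
  have hsmall : Set.MapsTo (extend e u 0) (e '' piece #F i)ᶜ (Metric.closedBall 0 ε) := by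
    intro d hd
    rw [mem_closedBall_zero_iff, Real.norm_eq_abs]
    by_cases hd' : ∃ q, e q = d
    · obtain ⟨q, rfl⟩ := hd'
      rw [he.extend_apply]
      exact abs_pieceLift_le_of_notMem hε hx fun hq => hd ⟨q, hq, rfl⟩
    · rw [extend_apply' _ _ _ hd']
      simpa using hε
  obtain ⟨f, hf, hfe⟩ := exists_continuous_stoneCech_extension continuous_of_discreteTopology hbound
  refine ⟨⟨f, hf⟩, Subtype.ext ?_, fun z hz => ?_⟩
  · have hfu : f ∘ stoneCechUnit ∘ e = u := funext fun q => by simp [hfe, he.extend_apply]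
    rw [coe_defectMap_apply]
    exact hfu ▸ rowDefect_pieceLift _ _ _
  · have hmaps : Set.MapsTo f (stoneCechUnit '' (e '' piece #F i)ᶜ) (Metric.closedBall 0 ε) := by
      rintro _ ⟨d, hd, rfl⟩
      exact (hfe d).symm ▸ hsmall hd
    simpa [Metric.isClosed_closedBall.closure_eq] using hmaps.closure hf (hi z hz)

theorem defectMap_surjective (he : Injective e) : Surjective (defectMap (stoneCechUnit ∘ e)) :=
  fun x =>
    have ⟨f, hf, _⟩ := exists_defectMap_eq_of_abs_le he ∅ le_rfl x (by simp)
    ⟨f, hf⟩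

theorem defectMap_isOpenMap (he : Injective e) : IsOpenMap (defectMap (stoneCechUnit ∘ e)) := by
  rw [IsTopologicalAddGroup.isOpenMap_iff_nhds_zero]
  have hbasis : (𝓝 (0 : Cp (StoneCech D))).HasBasis
      (fun Iε : Set (StoneCech D) × ℝ => Iε.1.Finite ∧ 0 < Iε.2)
      fun Iε => Subtype.val ⁻¹' Iε.1.pi fun _ => Metric.closedBall 0 Iε.2 := by
    rw [nhds_subtype, Submodule.coe_zero, nhds_pi]
    exact Metric.nhds_basis_closedBall.pi_self.comap _
  rw [(hbasis.map _).ge_iff]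
  rintro ⟨I, ε⟩ ⟨hI, hε⟩
  filter_upwards [ellInfty_setOf_abs_le_mem_nhds_zero #hI.toFinset hε] with x hx
  obtain ⟨f, hfx, hf⟩ := exists_defectMap_eq_of_abs_le he hI.toFinset hε.le x hx
  exact ⟨f, fun z hz => by simpa using hf z (by simpa using hz), hfx⟩

end StoneCech

end CpStoneCech

/-- For any infinite discrete space `D`, the space `C_p(βD)` has a quotient (by a linear
subspace) linearly homeomorphic to the subspace `ℓ∞` of `ℝ^ℕ`. -/
theorem cp_stoneCech_has_ellInfty_quotient
    (D : Type*) [TopologicalSpace D] [DiscreteTopology D] [Infinite D] :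
    ∃ Z : Submodule ℝ (Cp (StoneCech D)),
      Nonempty ((Cp (StoneCech D) ⧸ Z) ≃L[ℝ] ellInfty) := by
  let e : ℕ × ℕ ↪ D := Nat.pairEquiv.toEmbedding.trans (Infinite.natEmbedding D)
  let T : Cp (StoneCech D) →ₗ[ℝ] ellInfty := CpStoneCech.defectMap (stoneCechUnit ∘ e)
  have hT : IsOpenQuotientMap T := ⟨CpStoneCech.defectMap_surjective e.injective,
    (CpStoneCech.defectMap _).continuous, CpStoneCech.defectMap_isOpenMap e.injective⟩
  exact ⟨LinearMap.ker T, ⟨T.quotKerEquivOfIsOpenQuotientMap hT⟩⟩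
end

section
/- Let X be an infinite compact Hausdorff space that is not an Efimov space, i.e., X contains a nontrivial convergent sequence or a subspace homeomorphic to βℕ. Then there exists a linear subspace Z of C_p(X) such that the quotient space C_p(X)/Z is linearly homeomorphic either to the subspace ℓ∞ = {x ∈ ℝ^ℕ : sup_n |x_n| < ∞} of ℝ^ℕ or to the subspace c₀ = {x ∈ ℝ^ℕ : lim_{n→∞} x_n = 0} of ℝ^ℕ. -/
/-!
Both cases go through a closed copy `K ⊆ X` of `ℕ∞ = OnePoint ℕ`, resp. of `βℕ`, and a
continuous linear map `Φ : C_p(X) → ℝ^ℕ` whose coordinates read finitely many values on `K`: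
`f ↦ (f(n) - f(∞))ₙ` onto `c₀`, and the row averages `f ↦ ((n+1)⁻¹ ∑_{k ≤ n} f⟨n,k⟩)ₙ` of `f`
on `ℕ ⊆ βℕ` onto `ℓ∞`. Such a map is open, so `C_p(X) ⧸ ker Φ` is linearly homeomorphic to its
image, as soon as every target `y` that is small on finitely many coordinates lifts to some `f`
that is small on a prescribed finite set `I ⊆ X`. The lift is built on `K`, extended to `X` by
Tietze and multiplied by an Urysohn function vanishing on `I \ K`.

For `c₀` the lift is `y` on `ℕ` and `0` at `∞`. For `ℓ∞`, with `m = |I|`: every point of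
`βℕ` lies in the closure of at most one of the `m + 1` residue classes of columns modulo `m + 1`,
so some class `j` is avoided by all points of `I ∩ βℕ`. Rows `n < m` carry the constant `y n`
(small by assumption), while the mass of each row `n ≥ m` is put on the columns of class `j`;
as a class occupies at least a `1/(2(m+1))` fraction of a row, the lift stays bounded and so
extends to `βℕ`, where it is small at the points of `I`.
-/

open Topology Filter

/-- `c₀`, the linear subspace of sequences converging to `0` in `ℝ^ℕ`
(with the subspace topology inherited from the product topology). -/
def czero : Submodule ℝ (ℕ → ℝ) where
  carrier := {x | Filter.Tendsto x Filter.atTop (nhds 0)}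
  add_mem' {a b} hx hy := by
    have h := hx.add hy
    rw [add_zero] at h
    exact h
  zero_mem' := tendsto_const_nhds
  smul_mem' c x hx := by
    have h := hx.const_smul c
    rw [smul_zero] at h
    exact h

theorem mem_Cp {X : Type*} [TopologicalSpace X] {f : X → ℝ} : f ∈ Cp X ↔ Continuous f := Iff.rfl

theorem mem_czero {y : ℕ → ℝ} : y ∈ czero ↔ Tendsto y atTop (𝓝 0) := Iff.rfl

namespace ContinuousLinearMap

variable {M N : Type*} [AddCommGroup M] [Module ℝ M] [TopologicalSpace M]
  [AddCommGroup N] [Module ℝ N] [TopologicalSpace N] [IsTopologicalAddGroup N] [ContinuousSMul ℝ N]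

theorem surjective_of_isOpenMap (R : M →L[ℝ] N) (hR : IsOpenMap R) : Function.Surjective R := by
  refine LinearMap.range_eq_top.mp (Submodule.eq_top_of_nonempty_interior' _ ⟨R 0, ?_⟩)
  refine interior_maximal ?_ (hR _ isOpen_univ) ⟨0, trivial, rfl⟩
  rintro _ ⟨x, -, rfl⟩
  exact ⟨x, rfl⟩

theorem nonempty_quotient_ker_equiv_of_isOpenMap (R : M →L[ℝ] N) (hR : IsOpenMap R) :
    Nonempty ((M ⧸ (R : M →ₗ[ℝ] N).ker) ≃L[ℝ] N) :=
  ⟨(ContinuousLinearEquiv.quotKerEquivRange (hR.isStrictMap R.continuous)).trans <|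
    (ContinuousLinearEquiv.ofEq _ _
      (LinearMap.range_eq_top.mpr (R.surjective_of_isOpenMap hR))).trans Submodule.topContEquiv⟩

end ContinuousLinearMap

namespace Submodule

variable {ι : Type*} (V : Submodule ℝ (ι → ℝ))

theorem nhds_zero_basis_abs_le :
    (𝓝 (0 : V)).HasBasis (fun Iε : Set ι × ℝ => Iε.1.Finite ∧ 0 < Iε.2)
      fun Iε => {f : V | ∀ i ∈ Iε.1, |(f : ι → ℝ) i| ≤ Iε.2} := by
  rw [nhds_subtype, Submodule.coe_zero, nhds_pi]
  convert (Metric.nhds_basis_closedBall (x := (0 : ℝ)).pi_self).comap ((↑) : V → ι → ℝ) using 1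
  · rfl
  · ext Iε f
    simp [abs_le]

end Submodule

section PointwiseLift

variable {ι κ : Type*} {V : Submodule ℝ (ι → ℝ)} {W : Submodule ℝ (κ → ℝ)}

theorem ContinuousLinearMap.isOpenMap_of_forall_finset_exists_lift (R : V →L[ℝ] W)
    (h : ∀ I : Finset ι, ∃ N : Finset κ, ∀ ε > 0, ∀ y : W, (∀ n ∈ N, |(y : κ → ℝ) n| ≤ ε) →
      ∃ f : V, R f = y ∧ ∀ i ∈ I, |(f : ι → ℝ) i| ≤ ε) :
    IsOpenMap R := by
  rw [IsTopologicalAddGroup.isOpenMap_iff_nhds_zero]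
  refine ((V.nhds_zero_basis_abs_le).map R).ge_iff.2 fun ⟨I, ε⟩ ⟨hI, hε⟩ => ?_
  obtain ⟨N, hN⟩ := h hI.toFinset
  refine mem_of_superset
    (W.nhds_zero_basis_abs_le.mem_of_mem (i := ((N : Set κ), ε)) ⟨N.finite_toSet, hε⟩)
    fun y hy => ?_
  obtain ⟨f, hfy, hf⟩ := hN ε hε y hy
  exact ⟨f, fun i hi => hf i (hI.mem_toFinset.2 hi), hfy⟩

theorem exists_quotient_equiv_of_forall_finset_exists_lift (Φ : (ι → ℝ) →L[ℝ] (κ → ℝ))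
    (hΦ : ∀ f ∈ V, Φ f ∈ W)
    (h : ∀ I : Finset ι, ∃ N : Finset κ, ∀ ε > 0, ∀ y ∈ W, (∀ n ∈ N, |y n| ≤ ε) →
      ∃ f ∈ V, Φ f = y ∧ ∀ i ∈ I, |f i| ≤ ε) :
    ∃ Z : Submodule ℝ V, Nonempty ((V ⧸ Z) ≃L[ℝ] W) := by
  let R : V →L[ℝ] W := (Φ.comp V.subtypeL).codRestrict W fun f => hΦ f f.2
  refine ⟨_, R.nonempty_quotient_ker_equiv_of_isOpenMap
    (R.isOpenMap_of_forall_finset_exists_lift fun I => ?_)⟩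
  obtain ⟨N, hN⟩ := h I
  refine ⟨N, fun ε hε y hy => ?_⟩
  obtain ⟨f, hfV, hfy, hf⟩ := hN ε hε y y.2 hy
  exact ⟨⟨f, hfV⟩, Subtype.ext hfy, hf⟩

end PointwiseLift

open OnePoint

theorem exists_extension_eqOn_zero {X K : Type*} [TopologicalSpace X] [NormalSpace X]
    [TopologicalSpace K] {e : K → X} (he : IsClosedEmbedding e) (φ : C(K, ℝ)) {T : Set X}
    (hT : IsClosed T) (hTe : Disjoint T (Set.range e)) :
    ∃ f : C(X, ℝ), f ∘ e = φ ∧ Set.EqOn f 0 T := by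
  obtain ⟨g, hg⟩ := φ.exists_extension' he
  obtain ⟨u, hu0, hu1, -⟩ := exists_continuous_zero_one_of_isClosed hT he.isClosed_range hTe
  refine ⟨g * u, ?_, fun x hx => by simp [hu0 hx]⟩
  ext k
  simp [hu1 (Set.mem_range_self k), ← hg]

theorem exists_isClosedEmbedding_onePoint_nat {X : Type*} [TopologicalSpace X] [T2Space X]
    {x : ℕ → X} (hx : Function.Injective x) {p : X} (hxp : Tendsto x atTop (𝓝 p)) :
    ∃ τ : OnePoint ℕ → X, IsClosedEmbedding τ := by
  obtain ⟨N, hN⟩ := eventually_atTop.1 <|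
    Nat.cofinite_eq_atTop ▸ hx.tendsto_cofinite.eventually (eventually_cofinite_ne p)
  let τ := continuousMapMkNat (fun n => x (n + N)) p (hxp.comp (tendsto_add_atTop_nat N))
  refine ⟨τ, τ.continuous.isClosedEmbedding fun q q' h => ?_⟩
  cases q <;> cases q'
  · rfl
  · exact absurd h.symm (hN _ (Nat.le_add_left N _))
  · exact absurd h (hN _ (Nat.le_add_left N _))
  · exact congrArg _ (Nat.add_right_cancel (hx h))

theorem exists_quotient_equiv_czero {X : Type*} [TopologicalSpace X] [NormalSpace X] [T1Space X]
    {τ : OnePoint ℕ → X} (hτ : IsClosedEmbedding τ) :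
    ∃ Z : Submodule ℝ (Cp X), Nonempty ((Cp X ⧸ Z) ≃L[ℝ] czero) := by
  let Φ : (X → ℝ) →L[ℝ] (ℕ → ℝ) := .pi fun n => .proj (τ n) - .proj (τ ∞)
  refine exists_quotient_equiv_of_forall_finset_exists_lift Φ (fun f hf => ?_) fun I => ?_
  · have := (continuous_iff_from_nat _).1 ((mem_Cp.1 hf).comp hτ.continuous)
    simpa [Φ, mem_czero] using this.sub_const (f (τ ∞))
  refine ⟨I.preimage (fun n : ℕ => τ n) (hτ.injective.comp coe_injective).injOn,
    fun ε hε y hy hyI => ?_⟩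
  let φ := continuousMapMkNat y 0 hy
  obtain ⟨f, hfτ, hf0⟩ := exists_extension_eqOn_zero hτ φ (T := ↑I \ Set.range τ)
    I.finite_toSet.sdiff.isClosed Set.disjoint_sdiff_left
  have hf_infty : f (τ ∞) = 0 := congrFun hfτ ∞
  have hf_coe (n : ℕ) : f (τ n) = y n := congrFun hfτ n
  refine ⟨f, f.continuous, ?_, fun x hx => ?_⟩
  · ext n
    simp [Φ, hf_coe, hf_infty]
  by_cases hxτ : x ∈ Set.range τ
  · obtain ⟨q, rfl⟩ := hxτ
    cases q with
    | infty => simp [hf_infty, hε.le]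
    | coe n => simpa [hf_coe] using hyI n (by simpa using hx)
  · simp [hf0 ⟨hx, hxτ⟩, hε.le]

open Finset

noncomputable def rowAverage (a : ℕ → ℕ → ℝ) (n : ℕ) : ℝ := (∑ k ∈ range (n + 1), a n k) / (n + 1)

theorem abs_rowAverage_le {a : ℕ → ℕ → ℝ} {C : ℝ} (ha : ∀ n k, |a n k| ≤ C) (n : ℕ) :
    |rowAverage a n| ≤ C := by
  rw [rowAverage, abs_div, abs_of_pos (by positivity : (0 : ℝ) < n + 1),
    div_le_iff₀ (by positivity)]
  calc |∑ k ∈ range (n + 1), a n k| ≤ ∑ k ∈ range (n + 1), |a n k| := abs_sum_le_sum_abs _ _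
    _ ≤ ∑ _k ∈ range (n + 1), C := sum_le_sum fun k _ => ha n k
    _ = C * (n + 1) := by simp [mul_comm]

def rowClass (m : ℕ) (j : Fin (m + 1)) (n : ℕ) : Finset ℕ :=
  {k ∈ range (n + 1) | Fin.ofNat (m + 1) k = j}

theorem add_one_le_two_mul_card_rowClass {m n : ℕ} (j : Fin (m + 1)) (hmn : m ≤ n) :
    n + 1 ≤ 2 * (m + 1) * #(rowClass m j n) := by
  have hcount : #(rowClass m j n) = (n + 1).count (· ≡ j [MOD m + 1]) := by
    rw [Nat.count_eq_card_filter_range, rowClass]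
    congr 1
    refine filter_congr fun k _ => ?_
    rw [Fin.ext_iff, Fin.val_ofNat, Nat.ModEq, Nat.mod_eq_of_lt j.2]
  have hq : 1 ≤ (n + 1) / (m + 1) := (Nat.one_le_div_iff m.succ_pos).2 (by omega)
  have hlt : n + 1 < (m + 1) * ((n + 1) / (m + 1) + 1) := Nat.lt_mul_div_succ (n + 1) m.succ_pos
  rw [hcount, Nat.count_modEq_card _ m.succ_pos]
  split_ifs <;> nlinarith

theorem card_rowClass_pos {m n : ℕ} (j : Fin (m + 1)) (hmn : m ≤ n) : 0 < #(rowClass m j n) :=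
  Nat.pos_of_ne_zero fun h => by simpa [h] using add_one_le_two_mul_card_rowClass j hmn

noncomputable def rowLift (m : ℕ) (j : Fin (m + 1)) (y : ℕ → ℝ) (n k : ℕ) : ℝ :=
  if n < m then y n else if k ∈ rowClass m j n then y n * (n + 1) / #(rowClass m j n) else 0

section RowLift

variable {m : ℕ} (j : Fin (m + 1))

theorem rowAverage_rowLift (y : ℕ → ℝ) : rowAverage (rowLift m j y) = y := by
  ext n
  by_cases hn : n < m
  · simp [rowAverage, rowLift, hn]
    field_simp
  have hcard : (#(rowClass m j n) : ℝ) ≠ 0 := by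
    exact_mod_cast (card_rowClass_pos j (not_lt.1 hn)).ne'
  have hsub : range (n + 1) ∩ rowClass m j n = rowClass m j n :=
    inter_eq_right.2 (filter_subset _ _)
  simp only [rowAverage, rowLift, hn, if_false, sum_ite_mem, hsub, sum_const, nsmul_eq_mul]
  field_simp

theorem abs_rowLift_le {y : ℕ → ℝ} {C : ℝ} (hy : ∀ n, |y n| ≤ C) (n k : ℕ) :
    |rowLift m j y n k| ≤ 2 * (m + 1) * C := by
  have hC : 0 ≤ C := (abs_nonneg _).trans (hy 0)
  have hC' : C ≤ 2 * (m + 1) * C :=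
    le_mul_of_one_le_left hC (by linarith [(m.cast_nonneg : (0 : ℝ) ≤ m)])
  unfold rowLift
  split_ifs with hn hk
  · exact (hy n).trans hC'
  · have hcard := add_one_le_two_mul_card_rowClass j (not_lt.1 hn)
    have hpos : (0 : ℝ) < #(rowClass m j n) := by exact_mod_cast card_rowClass_pos j (not_lt.1 hn)
    rw [abs_div, abs_mul, abs_of_pos (by positivity : (0 : ℝ) < n + 1), Nat.abs_cast,
      div_le_iff₀ hpos]
    calc |y n| * (n + 1) ≤ C * (2 * (m + 1) * #(rowClass m j n)) :=
          mul_le_mul (hy n) (by exact_mod_cast hcard) (by positivity) hC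
      _ = 2 * (m + 1) * C * #(rowClass m j n) := by ring
  · simpa using hC.trans hC'

theorem abs_rowLift_le_of_ne {y : ℕ → ℝ} {ε : ℝ} (hε : 0 ≤ ε) (hy : ∀ n < m, |y n| ≤ ε) {n k : ℕ}
    (hk : Fin.ofNat (m + 1) k ≠ j) : |rowLift m j y n k| ≤ ε := by
  unfold rowLift
  split_ifs with hn hkj
  · exact hy n hn
  · exact absurd (mem_filter.1 hkj).2 hk
  · simpa using hε

end RowLift

theorem exists_stoneCech_extension_of_abs_le {α : Type*} [TopologicalSpace α] [DiscreteTopology α]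
    {g : α → ℝ} {C : ℝ} (hg : ∀ a, |g a| ≤ C) :
    ∃ G : C(StoneCech α, ℝ), ∀ a, G (stoneCechUnit a) = g a := by
  let g' : α → Set.Icc (-C) C := fun a => ⟨g a, abs_le.1 (hg a)⟩
  have hg' : Continuous g' := continuous_of_discreteTopology
  exact ⟨⟨_, continuous_subtype_val.comp (continuous_stoneCechExtend hg')⟩,
    fun a => congrArg Subtype.val (congrFun (stoneCechExtend_extends hg') a)⟩

theorem exists_rowAverage_eq_of_isClosedEmbedding {X : Type*} [TopologicalSpace X]
    [NormalSpace X] [T1Space X] {σ : StoneCech ℕ → X} (hσ : IsClosedEmbedding σ) (I : Finset X)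
    {ε : ℝ} (hε : 0 ≤ ε) {y : ℕ → ℝ} (hy : y ∈ ellInfty) (hyI : ∀ n < #I, |y n| ≤ ε) :
    ∃ f : C(X, ℝ), rowAverage (fun n k => f (σ (stoneCechUnit (Nat.pair n k)))) = y ∧
      ∀ x ∈ I, |f x| ≤ ε := by
  let c : ℕ → Fin (#I + 1) := fun t => Fin.ofNat _ (Nat.unpair t).2
  have hc : Continuous c := continuous_of_discreteTopology
  let Q := I.preimage σ hσ.injective.injOn
  obtain ⟨j, -, hj⟩ : ∃ j ∈ univ, j ∉ Q.image (stoneCechExtend hc) := by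
    refine exists_mem_notMem_of_card_lt_card ?_
    calc #(Q.image _) ≤ #Q := card_image_le
      _ ≤ #I := card_le_card_of_injOn σ (fun _ => mem_preimage.1) hσ.injective.injOn
      _ < #(univ : Finset (Fin (#I + 1))) := by simp
  obtain ⟨C, hC⟩ := hy
  let g : ℕ → ℝ := fun t => rowLift #I j y (Nat.unpair t).1 (Nat.unpair t).2
  obtain ⟨G, hG⟩ := exists_stoneCech_extension_of_abs_le (g := g) fun t => abs_rowLift_le j hC _ _
  obtain ⟨f, hfσ, hf0⟩ := exists_extension_eqOn_zero hσ G (T := ↑I \ Set.range σ)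
    I.finite_toSet.sdiff.isClosed Set.disjoint_sdiff_left
  have hf (q) : f (σ q) = G q := congrFun hfσ q
  have hGq (q) : stoneCechExtend hc q = j ∨ |G q| ≤ ε := by
    refine denseRange_stoneCechUnit.induction_on q
      ((isClosed_singleton.preimage (continuous_stoneCechExtend hc)).union
        (isClosed_le (continuous_abs.comp G.continuous) continuous_const)) fun t => ?_
    rw [stoneCechExtend_stoneCechUnit, hG]
    exact or_iff_not_imp_left.2 (abs_rowLift_le_of_ne j hε hyI)
  refine ⟨f, ?_, fun x hx => ?_⟩
  · simp only [hf, hG, g, Nat.unpair_pair]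
    exact rowAverage_rowLift j y
  by_cases hxσ : x ∈ Set.range σ
  · obtain ⟨q, rfl⟩ := hxσ
    rw [hf]
    exact (hGq q).resolve_left fun h => hj (mem_image.2 ⟨q, by simpa [Q] using hx, h⟩)
  · simp [hf0 ⟨hx, hxσ⟩, hε]

theorem exists_quotient_equiv_ellInfty {X : Type*} [TopologicalSpace X] [NormalSpace X]
    [T1Space X] {σ : StoneCech ℕ → X} (hσ : IsClosedEmbedding σ) :
    ∃ Z : Submodule ℝ (Cp X), Nonempty ((Cp X ⧸ Z) ≃L[ℝ] ellInfty) := by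
  let Φ : (X → ℝ) →L[ℝ] (ℕ → ℝ) := .pi fun n =>
    ((n : ℝ) + 1)⁻¹ • ∑ k ∈ range (n + 1), .proj (σ (stoneCechUnit (Nat.pair n k)))
  have hΦ (f : X → ℝ) : Φ f = rowAverage fun n k => f (σ (stoneCechUnit (Nat.pair n k))) := by
    ext n
    simp [Φ, rowAverage, div_eq_inv_mul]
  refine exists_quotient_equiv_of_forall_finset_exists_lift Φ (fun f hf => ?_)
    fun I => ⟨range #I, fun ε hε y hy hyI => ?_⟩
  · obtain ⟨C, hC⟩ := (isCompact_univ (X := StoneCech ℕ)).exists_bound_of_continuousOn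
      ((mem_Cp.1 hf).comp hσ.continuous).continuousOn
    exact hΦ f ▸ ⟨C, abs_rowAverage_le fun n k => hC _ trivial⟩
  obtain ⟨f, hf, hfI⟩ :=
    exists_rowAverage_eq_of_isClosedEmbedding hσ I hε.le hy fun n hn => hyI n (mem_range.2 hn)
  exact ⟨f, f.continuous, (hΦ f).trans hf, hfI⟩

theorem cp_quotient_ellInfty_or_czero_of_not_efimov_general
    (X : Type*) [TopologicalSpace X] [CompactSpace X] [T2Space X]
    (hX : (∃ x : ℕ → X, Function.Injective x ∧ ∃ p : X, Filter.Tendsto x Filter.atTop (nhds p)) ∨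
          (∃ s : Set X, Nonempty (s ≃ₜ StoneCech ℕ))) :
    ∃ Z : Submodule ℝ (Cp X),
      Nonempty ((Cp X ⧸ Z) ≃L[ℝ] ellInfty) ∨ Nonempty ((Cp X ⧸ Z) ≃L[ℝ] czero) := by
  rcases hX with ⟨x, hx, p, hxp⟩ | ⟨s, ⟨e⟩⟩
  · obtain ⟨τ, hτ⟩ := exists_isClosedEmbedding_onePoint_nat hx hxp
    obtain ⟨Z, hZ⟩ := exists_quotient_equiv_czero hτ
    exact ⟨Z, .inr hZ⟩
  · have hσ : IsClosedEmbedding ((↑) ∘ e.symm : StoneCech ℕ → X) :=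
      (continuous_subtype_val.comp e.symm.continuous).isClosedEmbedding
        (Subtype.val_injective.comp e.symm.injective)
    obtain ⟨Z, hZ⟩ := exists_quotient_equiv_ellInfty hσ
    exact ⟨Z, .inl hZ⟩

/-- If an infinite compact Hausdorff space `X` is not Efimov, i.e. contains a nontrivial
convergent sequence (a convergent sequence of pairwise distinct points) or a topological
copy of `βℕ`, then `C_p(X)` has a quotient (by a linear subspace) linearly homeomorphic
to the subspace `ℓ∞` or to the subspace `c₀` of `ℝ^ℕ`. -/
theorem cp_quotient_ellInfty_or_czero_of_not_efimov
    (X : Type*) [TopologicalSpace X] [CompactSpace X] [T2Space X] [Infinite X]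
    (hX : (∃ x : ℕ → X, Function.Injective x ∧ ∃ p : X, Filter.Tendsto x Filter.atTop (nhds p)) ∨
          (∃ s : Set X, Nonempty (s ≃ₜ StoneCech ℕ))) :
    ∃ Z : Submodule ℝ (Cp X),
      Nonempty ((Cp X ⧸ Z) ≃L[ℝ] ellInfty) ∨ Nonempty ((Cp X ⧸ Z) ≃L[ℝ] czero) :=
  cp_quotient_ellInfty_or_czero_of_not_efimov_general X hX
end

section
/- Let X be a topological space and Z a linear subspace of C_p(X). If the quotient space C_p(X)/Z with the quotient topology is metrizable, then C_p(X)/Z is separable. -/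
open Topology Filter

/-!
A continuous map into a space with countably generated neighbourhood filters, defined on a
subspace of a product, can only see countably many coordinates near a point: each basic
neighbourhood in the target pulls back to a set containing a neighbourhood that constrains
finitely many coordinates. Hence the quotient map `C_p(X) → C_p(X)/Z` is continuous at `0`, and
so everywhere by linearity, for the coarser topology of pointwise convergence on a countable set
`S ⊆ X`. That topology is induced from the second countable space `ℝ^S`, so `C_p(X)` is separable
for it, and the quotient is a continuous image of it.
-/

theorem Filter.exists_countable_tendsto_iInf {α β ι : Type*} {f : ι → Filter α} {g : α → β}
    {F : Filter β} [F.IsCountablyGenerated] (h : Tendsto g (⨅ i, f i) F) :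
    ∃ S : Set ι, S.Countable ∧ Tendsto g (⨅ i ∈ S, f i) F := by
  obtain ⟨b, hb⟩ := F.exists_antitone_basis
  have hfin : ∀ n, ∃ I : Finset ι, g ⁻¹' b n ∈ ⨅ i ∈ I, f i := fun n =>
    (mem_iInf_finite _).1 (h (hb.mem n))
  choose I hI using hfin
  refine ⟨⋃ n, (I n : Set ι), Set.countable_iUnion fun n => (I n).countable_toSet, ?_⟩
  refine hb.tendsto_right_iff.2 fun n _ => ?_
  have hle : ⨅ i ∈ ⋃ n, (I n : Set ι), f i ≤ ⨅ i ∈ I n, f i :=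
    biInf_mono (Set.subset_iUnion (fun n => (I n : Set ι)) n)
  exact hle (hI n)

theorem Cp.nhds_zero (X : Type*) [TopologicalSpace X] :
    𝓝 (0 : Cp X) = ⨅ x, comap (fun f : Cp X => (f : X → ℝ) x) (𝓝 0) := by
  rw [nhds_subtype, nhds_pi, Filter.pi]
  simp only [comap_iInf, comap_comap]
  rfl

def Cp.restrict {X : Type*} [TopologicalSpace X] (S : Set X) : Cp X →ₗ[ℝ] S → ℝ :=
  LinearMap.pi fun x => LinearMap.proj (x : X) ∘ₗ (Cp X).subtype

theorem Cp.comap_restrict_nhds_zero {X : Type*} [TopologicalSpace X] (S : Set X) :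
    comap (Cp.restrict S) (𝓝 0) =
      ⨅ x ∈ S, comap (fun f : Cp X => (f : X → ℝ) x) (𝓝 0) := by
  rw [nhds_pi, Filter.pi]
  simp only [comap_iInf, comap_comap, iInf_subtype']
  rfl

theorem separableSpace_of_tendsto_comap_nhds_zero {G Y Q : Type*} [AddCommGroup G]
    [AddCommGroup Y] [TopologicalSpace Y] [IsTopologicalAddGroup Y] [SecondCountableTopology Y]
    [AddCommGroup Q] [TopologicalSpace Q] [ContinuousAdd Q]
    (r : G →+ Y) (q : G →+ Q) (hq : Function.Surjective q)
    (h : Tendsto q (comap r (𝓝 0)) (𝓝 0)) : TopologicalSpace.SeparableSpace Q := by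
  let : TopologicalSpace G := .induced r ‹_›
  have : IsTopologicalAddGroup G := topologicalAddGroup_induced r
  have := TopologicalSpace.secondCountableTopology_induced G Y r
  have hcont : Continuous q :=
    continuous_of_tendsto_nhds_zero q (by rwa [nhds_induced, map_zero])
  exact hq.denseRange.separableSpace hcont

/-- Every metrizable quotient of `C_p(X)` (by a linear subspace, with the quotient
topology) is separable. -/
theorem cp_metrizable_quotient_separable
    (X : Type*) [TopologicalSpace X] (Z : Submodule ℝ (Cp X))
    (h : TopologicalSpace.MetrizableSpace (Cp X ⧸ Z)) :
    TopologicalSpace.SeparableSpace (Cp X ⧸ Z) := by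
  have hq : Tendsto Z.mkQ (⨅ x, comap (fun f : Cp X => (f : X → ℝ) x) (𝓝 0)) (𝓝 0) := by
    rw [← Cp.nhds_zero]
    exact Z.isOpenQuotientMap_mkQ.continuous.tendsto' 0 0 (map_zero _)
  obtain ⟨S, hS, hqS⟩ := exists_countable_tendsto_iInf hq
  have := hS.to_subtype
  refine separableSpace_of_tendsto_comap_nhds_zero
    (Cp.restrict S).toAddMonoidHom Z.mkQ.toAddMonoidHom Z.mkQ_surjective ?_
  simpa only [LinearMap.toAddMonoidHom_coe, Cp.comap_restrict_nhds_zero] using hqS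
end

section
/- Let X be a Hausdorff topological space, let (C_n)_{n∈ℕ} be a decreasing sequence of compact subsets of X (C_{n+1} ⊆ C_n for all n), and let A ⊆ C_0 be a subset such that A \ C_n is finite for every n ∈ ℕ. Then the set A ∪ ⋂_{n∈ℕ} C_n is compact. -/
/-!
A finite subfamily of an open cover covers the compact set `⋂ n, C n`; by compactness its union
already contains some `C n`, so only the finitely many points of `A \ C n` remain to be covered.
-/

open Set

theorem IsCompact.of_isCompact_diff_of_isOpen {X : Type*} [TopologicalSpace X] {K S : Set X}
    (hK : IsCompact K) (hKS : K ⊆ S) (hdiff : ∀ U, IsOpen U → K ⊆ U → IsCompact (S \ U)) :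
    IsCompact S := by
  refine isCompact_of_finite_subcover fun U hU hcover => ?_
  obtain ⟨t, ht⟩ := hK.elim_finite_subcover U hU (hKS.trans hcover)
  obtain ⟨t', ht'⟩ := (hdiff _ (isOpen_biUnion fun i _ => hU i) ht).elim_finite_subcover U hU
    (sdiff_subset.trans hcover)
  classical
  refine ⟨t ∪ t', ?_⟩
  rw [Finset.set_biUnion_union]
  exact fun x hx => (em _).imp id fun hxt => ht' ⟨hx, hxt⟩

theorem isCompact_union_iInter_of_directed {X ι : Type*} [TopologicalSpace X] [Nonempty ι]
    {C : ι → Set X} (hdir : Directed (· ⊇ ·) C) (hC : ∀ i, IsCompact (C i))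
    (hC_closed : ∀ i, IsClosed (C i)) {A : Set X} (hfin : ∀ i, (A \ C i).Finite) :
    IsCompact (A ∪ ⋂ i, C i) := by
  have hInter : IsCompact (⋂ i, C i) :=
    (hC (Classical.arbitrary ι)).of_isClosed_subset (isClosed_iInter hC_closed) (iInter_subset _ _)
  refine hInter.of_isCompact_diff_of_isOpen subset_union_right fun U hU hCU => ?_
  obtain ⟨i, hi⟩ := exists_subset_nhds_of_isCompact' hdir hC hC_closed
    fun x hx => hU.mem_nhds (hCU hx)
  refine ((hfin i).subset ?_).isCompact
  rintro x ⟨hx, hxU⟩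
  exact ⟨hx.resolve_right fun hxC => hxU (hCU hxC), fun hxi => hxU (hi hxi)⟩

theorem isCompact_union_iInter_of_decreasing_general
    (X : Type*) [TopologicalSpace X] [T2Space X]
    (C : ℕ → Set X) (hC : ∀ n, IsCompact (C n)) (hmono : ∀ n, C (n + 1) ⊆ C n)
    (A : Set X) (hfin : ∀ n, (A \ C n).Finite) :
    IsCompact (A ∪ ⋂ n, C n) :=
  isCompact_union_iInter_of_directed (antitone_nat_of_succ_le hmono).directed_ge hC
    (fun n => (hC n).isClosed) hfin

/-- Let `X` be Hausdorff, `(Cₙ)` a decreasing sequence of compact subsets of `X`, and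
`A ⊆ C₀` a set such that `A \ Cₙ` is finite for every `n`. Then `A ∪ ⋂ₙ Cₙ` is compact. -/
theorem isCompact_union_iInter_of_decreasing
    (X : Type*) [TopologicalSpace X] [T2Space X]
    (C : ℕ → Set X) (hC : ∀ n, IsCompact (C n)) (hmono : ∀ n, C (n + 1) ⊆ C n)
    (A : Set X) (hA : A ⊆ C 0) (hfin : ∀ n, (A \ C n).Finite) :
    IsCompact (A ∪ ⋂ n, C n) :=
  isCompact_union_iInter_of_decreasing_general X C hC hmono A hfin
end

section
/- Let X be a Tychonoff space and K a compact subset of X. Then the restriction map R : C_p(X) → C_p(K), R(f) = f|_K, is a linear, continuous, open surjection of C_p(X) onto C_p(K). -/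
open Topology Filter

/-- The restriction map `C_p(X) → C_p(K)`, `f ↦ f|K`, as a linear map. -/
def cpRestrict {X : Type*} [TopologicalSpace X] (K : Set X) :
    Cp X →ₗ[ℝ] Cp K where
  toFun f := ⟨fun x : K => (f : X → ℝ) x, f.2.comp continuous_subtype_val⟩
  map_add' f g := rfl
  map_smul' c f := rfl

/-!
Surjectivity is a Tietze extension through the Stone–Čech compactification, in which `K`
sits as a closed set. For openness, a basic neighbourhood of `0` in `C_p(X)` only constrains
`f` at finitely many points; given `g` small at those of them lying in `K`, extend `g` to some
`G` and multiply by a continuous `φ` that is `1` on `K` and vanishes at the points outside `K`.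
-/

universe u v

section

variable {X : Type u} [TopologicalSpace X]

theorem IsCompact.exists_restrict_eq [T35Space X] {Y : Type v} [TopologicalSpace Y]
    [TietzeExtension.{u, v} Y] {K : Set X} (hK : IsCompact K) (f : C(K, Y)) :
    ∃ g : C(X, Y), g.restrict K = f := by
  have : CompactSpace K := isCompact_iff_compactSpace.mp hK
  have hK_emb : IsClosedEmbedding (stoneCechUnit ∘ Subtype.val : K → StoneCech X) :=
    (continuous_stoneCechUnit.comp continuous_subtype_val).isClosedEmbedding
      (injective_stoneCechUnit_of_t35Space.comp Subtype.val_injective)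
  obtain ⟨G, hG⟩ := f.exists_extension' hK_emb
  exact ⟨G.comp ⟨stoneCechUnit, continuous_stoneCechUnit⟩, ContinuousMap.ext (congrFun hG)⟩

theorem IsClosed.exists_continuous_eqOn_one_eqOn_zero_of_finite [CompletelyRegularSpace X]
    {K F : Set X} (hK : IsClosed K) (hF : F.Finite) (hKF : Disjoint K F) :
    ∃ φ : C(X, ℝ), Set.EqOn φ 1 K ∧ Set.EqOn φ 0 F := by
  induction F, hF using Set.Finite.induction_on with
  | empty => exact ⟨1, fun _ _ => rfl, fun _ h => h.elim⟩
  | @insert a F _ _ ih =>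
    obtain ⟨φ, hφK, hφF⟩ := ih (hKF.mono_right (Set.subset_insert a F))
    obtain ⟨ψ, hψ, hψa, hψK⟩ := CompletelyRegularSpace.completely_regular a K hK
      (Set.disjoint_right.mp hKF (Set.mem_insert a F))
    refine ⟨φ * ⟨_, continuous_subtype_val.comp hψ⟩, fun x hx => ?_, ?_⟩
    · simp [hφK hx, hψK hx]
    · rintro x (rfl | hx)
      · simp [hψa]
      · simp [hφF hx]

@[simp]
theorem cpRestrict_apply {K : Set X} (f : Cp X) (k : K) :
    (cpRestrict K f : K → ℝ) k = (f : X → ℝ) k :=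
  rfl

theorem continuous_cpRestrict (K : Set X) : Continuous (cpRestrict K) := by
  apply Continuous.subtype_mk
  exact continuous_pi fun k => (continuous_apply (k : X)).comp continuous_subtype_val

theorem cpRestrict_surjective [T35Space X] {K : Set X} (hK : IsCompact K) :
    Function.Surjective (cpRestrict K) := fun g => by
  obtain ⟨f, hf⟩ := hK.exists_restrict_eq ⟨(g : K → ℝ), g.2⟩
  exact ⟨⟨f, f.continuous⟩, Subtype.ext (congrArg DFunLike.coe hf)⟩

theorem isOpenMap_cpRestrict_of_surjective [CompletelyRegularSpace X] {K : Set X}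
    (hK : IsClosed K) (hsurj : Function.Surjective (cpRestrict K)) :
    IsOpenMap (cpRestrict K) := by
  rw [IsTopologicalAddGroup.isOpenMap_iff_nhds_zero]
  refine le_map fun s hs => ?_
  rw [nhds_subtype_eq_comap, mem_comap] at hs
  obtain ⟨T, hT, hTs⟩ := hs
  rw [nhds_pi, mem_pi] at hT
  obtain ⟨I, hI, t, ht, htT⟩ := hT
  have h_small : ∀ᶠ g : Cp K in 𝓝 0, ∀ k ∈ ((↑) : K → X) ⁻¹' I, (g : K → ℝ) k ∈ t k :=
    (hI.preimage Subtype.val_injective.injOn).eventually_all.2 fun k _ =>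
      ((continuous_apply k).comp continuous_subtype_val).continuousAt.preimage_mem_nhds (ht k)
  filter_upwards [h_small] with g hg
  obtain ⟨G, rfl⟩ := hsurj g
  obtain ⟨φ, hφK, hφF⟩ := hK.exists_continuous_eqOn_one_eqOn_zero_of_finite
    (hI.sdiff (t := K)) Set.disjoint_sdiff_right
  refine ⟨⟨φ * (G : X → ℝ), φ.continuous.mul G.2⟩, hTs (htT fun x hx => ?_), ?_⟩
  · by_cases hxK : x ∈ K
    · simpa [hφK hxK] using hg ⟨x, hxK⟩ hx
    · simpa [hφF ⟨hx, hxK⟩] using mem_of_mem_nhds (ht x)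
  · ext k
    simp [hφK k.2]

end

/-- For a Tychonoff space `X` and a compact subset `K ⊆ X`, the restriction map
`R : C_p(X) → C_p(K)`, `R(f) = f|K` (which is linear), is a continuous open
surjection of `C_p(X)` onto `C_p(K)`. -/
theorem cpRestrict_continuous_open_surjective
    (X : Type*) [TopologicalSpace X] [T2Space X] [CompletelyRegularSpace X]
    (K : Set X) (hK : IsCompact K) :
    Continuous (cpRestrict K) ∧ IsOpenMap (cpRestrict K) ∧
      Function.Surjective (cpRestrict K) := by
  have : T35Space X := ⟨⟩
  have hsurj := cpRestrict_surjective hK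
  exact ⟨continuous_cpRestrict K, isOpenMap_cpRestrict_of_surjective hK.isClosed hsurj, hsurj⟩
end

section
/- Let X be a Tychonoff space. Suppose that C_c(X) (the space of continuous real-valued functions on X with the compact-open topology) has an infinite-dimensional separable quotient, and that for every infinite compact subset K ⊆ X the space C_p(K) has an infinite-dimensional separable quotient. Then C_p(X) has an infinite-dimensional separable quotient, i.e., there exists a linear subspace Z of C_p(X) such that C_p(X)/Z with the quotient topology is infinite-dimensional and separable. -/
/-!
If `X` contains an infinite compact set `K`, restriction `C_p(X) → C_p(K)` is a continuous open
linear surjection: a continuous function on `K` extends to `X` through the Stone–Čech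
compactification, and the extension can then be corrected at finitely many points off `K` by
Urysohn-type bump functions. Otherwise every compact subset of `X` is finite, so the compact-open
and pointwise topologies on `C(X, ℝ)` coincide. In both cases an infinite-dimensional separable
quotient `M ⧸ Z₀` of the target pulls back along the linear quotient map `T : E → M` to
`E ⧸ ker (mkQ ∘ T)`, which is linearly isomorphic to `M ⧸ Z₀` and is a continuous image of it.
-/

open Topology Filter

open Set TopologicalSpace

def HasInfDimSeparableQuotient (𝕜 E : Type*) [DivisionRing 𝕜] [AddCommGroup E] [Module 𝕜 E]
    [TopologicalSpace E] : Prop :=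
  ∃ Z : Submodule 𝕜 E, ¬ FiniteDimensional 𝕜 (E ⧸ Z) ∧ SeparableSpace (E ⧸ Z)

theorem HasInfDimSeparableQuotient.of_isQuotientMap {𝕜 E M : Type*} [DivisionRing 𝕜]
    [AddCommGroup E] [Module 𝕜 E] [TopologicalSpace E]
    [AddCommGroup M] [Module 𝕜 M] [TopologicalSpace M]
    (T : E →ₗ[𝕜] M) (hT : IsQuotientMap T) (hM : HasInfDimSeparableQuotient 𝕜 M) :
    HasInfDimSeparableQuotient 𝕜 E := by
  obtain ⟨Z, hZ, hsep⟩ := hM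
  set S := Z.mkQ ∘ₗ T
  have hS : IsQuotientMap S := Z.isQuotientMap_mkQ.comp hT
  let e := S.quotKerEquivOfSurjective hS.surjective
  have he_symm : Continuous e.symm := by
    refine hS.continuous_iff.mpr ?_
    have : e.symm ∘ S = (LinearMap.ker S).mkQ := funext fun x => by
      simp [e, LinearMap.quotKerEquivOfSurjective_symm_apply]
    exact this ▸ (LinearMap.ker S).isQuotientMap_mkQ.continuous
  exact ⟨LinearMap.ker S, fun h => hZ (Module.Finite.equiv e),
    e.symm.surjective.denseRange.separableSpace he_symm⟩

section Tychonoff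

variable {X : Type*} [TopologicalSpace X]

theorem IsCompact.exists_continuous_extension [T35Space X] {K : Set X} (hK : IsCompact K)
    (g : C(K, ℝ)) : ∃ G : C(X, ℝ), G.restrict K = g := by
  have : CompactSpace K := isCompact_iff_compactSpace.mp hK
  have hemb : IsClosedEmbedding (stoneCechUnit ∘ ((↑) : K → X)) :=
    (continuous_stoneCechUnit.comp continuous_subtype_val).isClosedEmbedding
      (isEmbedding_stoneCechUnit.injective.comp Subtype.val_injective)
  obtain ⟨G, hG⟩ := g.exists_extension' hemb
  exact ⟨G.comp ⟨stoneCechUnit, continuous_stoneCechUnit⟩, ContinuousMap.ext (congrFun hG)⟩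

theorem exists_continuous_eqOn_zero_eqOn_of_finite [CompletelyRegularSpace X] [T1Space X]
    {K F : Set X} (hK : IsClosed K) (hF : F.Finite) (hKF : Disjoint K F) (v : X → ℝ) :
    ∃ b : X → ℝ, Continuous b ∧ EqOn b 0 K ∧ EqOn b v F := by
  induction F, hF using Set.Finite.induction_on with
  | empty => exact ⟨0, continuous_const, fun _ _ => rfl, fun _ h => h.elim⟩
  | @insert a F haF hF ih =>
    obtain ⟨b, hbc, hbK, hbF⟩ := ih (hKF.mono_right (subset_insert a F))
    have haKF : a ∉ K ∪ F := fun h => h.elim (hKF.notMem_of_mem_left · (mem_insert a F)) haF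
    obtain ⟨φ, hφc, hφa, hφKF⟩ :=
      CompletelyRegularSpace.completely_regular a _ (hK.union hF.isClosed) haKF
    refine ⟨fun x => b x + (v a - b a) * (1 - φ x), by fun_prop, fun x hx => ?_, ?_⟩
    · simp [hbK hx, hφKF (Or.inl hx)]
    · rintro x (rfl | hx)
      · simp [hφa]
      · simp [hbF hx, hφKF (Or.inr hx)]

end Tychonoff

namespace Cp

variable {X : Type*} [TopologicalSpace X]

def restrict_s13 (K : Set X) : Cp X →ₗ[ℝ] Cp K where
  toFun f := ⟨fun y : K => f.1 y, (f.2 : Continuous f.1).comp continuous_subtype_val⟩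
  map_add' _ _ := rfl
  map_smul' _ _ := rfl

@[simp]
theorem restrict_apply (K : Set X) (f : Cp X) (y : K) : (restrict_s13 K f).1 y = f.1 y := rfl

theorem continuous_restrict (K : Set X) : Continuous (restrict_s13 K) :=
  (continuous_pi fun y : K => (continuous_apply (y : X)).comp continuous_subtype_val).subtype_mk
    fun f : Cp X => (f.2 : Continuous f.1).comp continuous_subtype_val

def equivContinuousMap : Cp X ≃ₗ[ℝ] C(X, ℝ) where
  toFun f := ⟨f.1, f.2⟩
  invFun g := ⟨g, g.continuous⟩
  map_add' _ _ := rfl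
  map_smul' _ _ := rfl
  left_inv _ := rfl
  right_inv _ := rfl

theorem continuous_equivContinuousMap_symm : Continuous (equivContinuousMap (X := X)).symm :=
  (continuous_pi fun x => continuous_eval_const x).subtype_mk _

theorem continuous_equivContinuousMap (hX : ∀ K : Set X, IsCompact K → K.Finite) :
    Continuous (equivContinuousMap (X := X)) := by
  refine ContinuousMap.continuous_compactOpen.mpr fun K hK U hU => ?_
  have : {f : Cp X | MapsTo (equivContinuousMap f) K U} = ⋂ x ∈ K, {f | f.1 x ∈ U} := by
    ext f
    simp only [MapsTo, mem_iInter, mem_ofPred_eq]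
    rfl
  rw [this]
  exact (hX K hK).isOpen_biInter fun x _ =>
    hU.preimage ((continuous_apply x).comp continuous_subtype_val)

variable [T35Space X]

theorem exists_restrict_eq_eqOn {K F : Set X} (hK : IsCompact K) (hF : F.Finite)
    (hKF : Disjoint K F) (h : Cp K) (f : X → ℝ) :
    ∃ H : Cp X, restrict_s13 K H = h ∧ EqOn H f F := by
  obtain ⟨G, hG⟩ := hK.exists_continuous_extension ⟨h.1, h.2⟩
  obtain ⟨b, hbc, hbK, hbF⟩ :=
    exists_continuous_eqOn_zero_eqOn_of_finite hK.isClosed hF hKF (f - G)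
  refine ⟨⟨G + b, G.continuous.add hbc⟩, Subtype.ext (funext fun y => ?_), fun x hx => ?_⟩
  · simp only [restrict_apply, Pi.add_apply, hbK y.2, Pi.zero_apply, add_zero]
    exact DFunLike.congr_fun hG y
  · simp [hbF hx]

theorem restrict_surjective {K : Set X} (hK : IsCompact K) :
    Function.Surjective (restrict_s13 K) := fun h =>
  (exists_restrict_eq_eqOn hK finite_empty (disjoint_empty K) h 0).imp fun _ hH => hH.1

theorem isOpenMap_restrict {K : Set X} (hK : IsCompact K) : IsOpenMap (restrict_s13 K) := by
  intro U hU
  rw [isOpen_iff_mem_nhds]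
  rintro _ ⟨f, hfU, rfl⟩
  obtain ⟨s, hs, hsU⟩ := (mem_nhds_subtype _ f U).mp (hU.mem_nhds hfU)
  rw [nhds_pi] at hs
  obtain ⟨I, hI, t, ht, hIt⟩ := Filter.mem_pi.mp hs
  -- points of `I` inside `K` are controlled by the restriction, those outside by interpolation
  have hV : (⋂ y ∈ ((↑) ⁻¹' I : Set K), {h : Cp K | h.1 y ∈ t y}) ∈ 𝓝 (restrict_s13 K f) :=
    (Filter.biInter_mem (hI.preimage Subtype.val_injective.injOn)).mpr fun y _ =>
      ((continuous_apply y).comp continuous_subtype_val).continuousAt.preimage_mem_nhds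
        (ht (y : X))
  refine Filter.mem_of_superset hV fun h hh => ?_
  simp only [mem_iInter, mem_preimage, mem_ofPred_eq] at hh
  obtain ⟨H, hHK, hHf⟩ :=
    exists_restrict_eq_eqOn hK (hI.sdiff (t := K)) disjoint_sdiff_right h f
  refine ⟨H, hsU (hIt fun x hx => ?_), hHK⟩
  by_cases hxK : x ∈ K
  · simpa [← hHK] using hh ⟨x, hxK⟩ hx
  · simpa [hHf ⟨hx, hxK⟩] using mem_of_mem_nhds (ht x)

end Cp

/-- Let `X` be Tychonoff. If `C_c(X)` (continuous real functions with the compact-open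
topology) has an infinite-dimensional separable quotient, and for every infinite compact
`K ⊆ X` the space `C_p(K)` has an infinite-dimensional separable quotient, then `C_p(X)`
has an infinite-dimensional separable quotient. -/
theorem cp_has_separable_quotient_of_cc
    (X : Type*) [TopologicalSpace X] [T2Space X] [CompletelyRegularSpace X]
    (hCc : ∃ Z : Submodule ℝ C(X, ℝ),
      ¬ FiniteDimensional ℝ (C(X, ℝ) ⧸ Z) ∧
      TopologicalSpace.SeparableSpace (C(X, ℝ) ⧸ Z))
    (hK : ∀ K : Set X, IsCompact K → K.Infinite →
      ∃ Z : Submodule ℝ (Cp K),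
        ¬ FiniteDimensional ℝ (Cp K ⧸ Z) ∧
        TopologicalSpace.SeparableSpace (Cp K ⧸ Z)) :
    ∃ Z : Submodule ℝ (Cp X),
      ¬ FiniteDimensional ℝ (Cp X ⧸ Z) ∧
      TopologicalSpace.SeparableSpace (Cp X ⧸ Z) := by
  have : T35Space X := ⟨⟩
  by_cases hinf : ∃ K : Set X, IsCompact K ∧ K.Infinite
  · obtain ⟨K, hKc, hKi⟩ := hinf
    have hρ : IsQuotientMap (Cp.restrict_s13 K) :=
      IsOpenQuotientMap.isQuotientMap
        ⟨Cp.restrict_surjective hKc, Cp.continuous_restrict K, Cp.isOpenMap_restrict hKc⟩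
    exact HasInfDimSeparableQuotient.of_isQuotientMap _ hρ (hK K hKc hKi)
  · push Not at hinf
    have hι : IsQuotientMap (Cp.equivContinuousMap (X := X)) :=
      .of_inverse Cp.continuous_equivContinuousMap_symm
        (Cp.continuous_equivContinuousMap hinf) Cp.equivContinuousMap.right_inv
    exact HasInfDimSeparableQuotient.of_isQuotientMap Cp.equivContinuousMap.toLinearMap hι hCc
end

section
/- For every topological space X, every linear subspace of C_p(X) that is linearly homeomorphic to ℝ^ℕ (with the product topology) is complemented in C_p(X); consequently, if C_p(X) has a linear subspace linearly homeomorphic to ℝ^ℕ, then C_p(X) has a quotient (by a linear subspace, with the quotient topology) linearly homeomorphic to ℝ^ℕ. -/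
open Topology Filter

/-!
Each coordinate of a continuous linear map from a subspace into `𝕜^ι` extends to the whole space
by Hahn–Banach, so `𝕜^ι` is injective among polynormable spaces and every copy of it is
complemented; the quotient by the complement is then isomorphic to it. `C_p(X)` is polynormable
as a subspace of the product `ℝ^X`.
-/

section

variable {𝕜 E : Type*} [NontriviallyNormedField 𝕜] [IsRCLikeNormedField 𝕜]
  [AddCommGroup E] [TopologicalSpace E] [Module 𝕜 E] [PolynormableSpace 𝕜 E]

theorem ContinuousLinearMap.exists_extension_pi {ι : Type*} {S : Submodule 𝕜 E}
    (f : S →L[𝕜] (ι → 𝕜)) : ∃ g : E →L[𝕜] (ι → 𝕜), ∀ x : S, g x = f x := by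
  choose g hg using fun i ↦ StrongDual.exists_extension S (.proj i ∘L f)
  exact ⟨.pi g, fun x ↦ funext fun i ↦ hg i x⟩

theorem Submodule.closedComplemented_of_equiv_pi {ι : Type*} {S : Submodule 𝕜 E}
    (e : S ≃L[𝕜] (ι → 𝕜)) : S.ClosedComplemented := by
  obtain ⟨g, hg⟩ := (e : S →L[𝕜] (ι → 𝕜)).exists_extension_pi
  exact ⟨(e.symm : (ι → 𝕜) →L[𝕜] S) ∘L g, fun x ↦ by simp [hg]⟩

end

theorem Submodule.ClosedComplemented.exists_quotient_equiv {R M : Type*} [Ring R]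
    [AddCommGroup M] [Module R M] [TopologicalSpace M] [IsTopologicalAddGroup M]
    {p : Submodule R M} (hp : p.ClosedComplemented) :
    ∃ q : Submodule R M, Nonempty ((M ⧸ q) ≃L[R] p) :=
  ⟨hp.complement, ⟨quotientEquivOfIsTopCompl _ _ hp.isTopCompl_complement.symm⟩⟩

/-- In `C_p(X)`, every linear subspace linearly homeomorphic to `ℝ^ℕ` is complemented
(there is a continuous linear projection of `C_p(X)` onto it); consequently, if `C_p(X)`
has a linear subspace linearly homeomorphic to `ℝ^ℕ`, then `C_p(X)` has a quotient by a
linear subspace linearly homeomorphic to `ℝ^ℕ`. -/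
theorem cp_pi_subspace_complemented (X : Type*) [TopologicalSpace X] :
    (∀ S : Submodule ℝ (Cp X), Nonempty (S ≃L[ℝ] (ℕ → ℝ)) →
      ∃ P : Cp X →L[ℝ] S, ∀ x : S, P (x : Cp X) = x) ∧
    ((∃ S : Submodule ℝ (Cp X), Nonempty (S ≃L[ℝ] (ℕ → ℝ))) →
      ∃ Z : Submodule ℝ (Cp X), Nonempty ((Cp X ⧸ Z) ≃L[ℝ] (ℕ → ℝ))) := by
  have complemented (S : Submodule ℝ (Cp X)) : Nonempty (S ≃L[ℝ] (ℕ → ℝ)) →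
      S.ClosedComplemented := fun ⟨e⟩ ↦ Submodule.closedComplemented_of_equiv_pi e
  refine ⟨complemented, fun ⟨S, ⟨e⟩⟩ ↦ ?_⟩
  obtain ⟨Z, ⟨φ⟩⟩ := (complemented S ⟨e⟩).exists_quotient_equiv
  exact ⟨Z, ⟨φ.trans e⟩⟩
end
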